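/- arXiv:math/0204326 — 6 statements merged into one kernel-verified Lean document; each statement's English description precedes it below -/
import Mathlib

section
/- Let u be a surjection of degree d ≥ 1 onto {1,…,r}, let k ∈ {1,…,r} with d_k(u) ≥ 2, and let x be an integer with 0 ≤ x ≤ d_k(u)−1. Let v : {1,…,r+d−1} → {1,…,r} be the sequence obtained from (u(1),…,u(r+d)) by deleting the (x+1)-st occurrence of the value k. Then v is a surjection of degree d−1 onto {1,…,r} with d_k(v) = d_k(u)−1 and d_j(v) = d_j(u) for j ≠ k, and for every vertex y = (y_1,…,y_r) of the prism of v one has τ_v(y) = τ_u(y'), where y'_j = y_j for j ≠ k, and y'_k = y_k if y_k < x, y'_k = y_k + 1 if y_k ≥ x. -/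
/-! ## Surjections, prisms and the Barratt-Eccles complex: basic definitions -/

/-- `cnt u k` is the number of occurrences of the value `k` in the sequence
`(u 0, …, u (n-1))` (written `d_k(u)` in the paper). -/
def cnt {n r : ℕ} (u : Fin n → Fin r) (k : Fin r) : ℕ :=
  (Finset.univ.filter fun i => u i = k).card

/-- `u` is nondegenerate: no two consecutive entries are equal. -/
def Nondeg {n r : ℕ} (u : Fin n → Fin r) : Prop :=
  ∀ i : ℕ, ∀ h : i + 1 < n, u ⟨i + 1, h⟩ ≠ u ⟨i, Nat.lt_of_succ_lt h⟩

/-- `x` is a vertex of the prism of `u`: `0 ≤ x k ≤ d_k(u) - 1` for all `k`. -/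
def IsVertex {n r : ℕ} (u : Fin n → Fin r) (x : Fin r → ℕ) : Prop :=
  ∀ k, x k < cnt u k

/-- `p` is a selected position of the vertex `x` of the prism of `u`, i.e. `p` is
the position of the `(x k + 1)`-st occurrence of `k = u p` in `u`. -/
def IsSel {n r : ℕ} (u : Fin n → Fin r) (x : Fin r → ℕ) (p : Fin n) : Prop :=
  (Finset.univ.filter fun q => q < p ∧ u q = u p).card = x (u p)

instance {n r : ℕ} (u : Fin n → Fin r) (x : Fin r → ℕ) : DecidablePred (IsSel u x) :=
  fun _ => inferInstanceAs (Decidable (_ = _))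

/-- `τ_u(x)` as a list: the values of `u` at the selected positions of the vertex `x`,
read in increasing order of position.  For a genuine vertex `x` this is a sequence in
which each element of `Fin r` occurs exactly once. -/
def tauList {n r : ℕ} (u : Fin n → Fin r) (x : Fin r → ℕ) : List (Fin r) :=
  ((List.finRange n).filter fun p => decide (IsSel u x p)).map u

/-- `τ_u(x)` as a function `Fin r → Fin r` (the `j`-th entry of `tauList`). -/
def tauFun {n r : ℕ} (u : Fin n → Fin r) (x : Fin r → ℕ) (j : Fin r) : Fin r :=
  (tauList u x).getD (j : ℕ) j

open Classical in
/-- `τ_u(x)` as a permutation of `Fin r`.  For a genuine vertex `x` of the prism of a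
surjection `u` the reading function `tauFun u x` is bijective and this is the
corresponding permutation. -/
noncomputable def tauPerm {n r : ℕ} (u : Fin n → Fin r) (x : Fin r → ℕ) : Equiv.Perm (Fin r) :=
  if h : Function.Bijective (tauFun u x) then Equiv.ofBijective _ h else 1

/-- A maximal chain of the prism of a surjection `u` of degree `d`: it starts at
`(0,…,0)`, ends at `(d_1(u)-1, …, d_r(u)-1)`, and each step adds `1` to exactly one
coordinate. -/
def PrismMaxChain {r d : ℕ} (u : Fin (r + d) → Fin r) (x : Fin (d + 1) → Fin r → ℕ) : Prop :=
  (∀ k, x 0 k = 0) ∧ (∀ k, x (Fin.last d) k = cnt u k - 1) ∧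
    ∀ i : Fin d, ∃ k, x i.succ = Function.update (x i.castSucc) k (x i.castSucc k + 1)

/-- The chain associated to a sequence of steps `(k_0, …, k_{d-1})`:
`x⁽⁰⁾ = (0,…,0)` and `x⁽ⁱ⁺¹⁾ = x⁽ⁱ⁾ + e_{k_i}`; in closed form, `x⁽ⁱ⁾ j` is the
number of indices `t < i` with `k t = j`. -/
def chainOf {r d : ℕ} (k : Fin d → Fin r) : Fin (d + 1) → Fin r → ℕ :=
  fun i j => (Finset.univ.filter fun t : Fin d => (t : ℕ) < (i : ℕ) ∧ k t = j).card

/-- The caesura sequence of `u`: the sequence obtained from `(u 0, …, u (n-1))` by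
deleting, for each value `k`, its last occurrence (i.e. we keep exactly the positions
having a later occurrence of the same value). -/
def caesura {n r : ℕ} (u : Fin n → Fin r) : List (Fin r) :=
  ((List.finRange n).filter fun p => decide (∃ q, p < q ∧ u q = u p)).map u

/-- The fundamental chain of `u`: the chain of steps given by the caesura sequence;
in closed form, `fundChain u i j` is the number of occurrences of `j` among the first
`i` entries of the caesura sequence. -/
def fundChain {r d : ℕ} (u : Fin (r + d) → Fin r) : Fin (d + 1) → Fin r → ℕ :=
  fun i j => ((caesura u).take (i : ℕ)).count j

/-- The `n`-simplex `(w 0, …, w n)` of the Barratt-Eccles simplicial set `W(r)` lies in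
the image of the prism of `u`. -/
def InPrism {r d n : ℕ} (u : Fin (r + d) → Fin r) (w : Fin (n + 1) → Equiv.Perm (Fin r)) :
    Prop :=
  ∃ x : Fin (n + 1) → Fin r → ℕ,
    (∀ i, IsVertex u (x i)) ∧ (∀ i : Fin n, ∀ k, x i.castSucc k ≤ x i.succ k) ∧
      ∀ i, tauPerm u (x i) = w i

/-- `v` is a subsequence of `u`. -/
def IsSubseq {r d e : ℕ} (v : Fin (r + e) → Fin r) (u : Fin (r + d) → Fin r) : Prop :=
  ∃ φ : Fin (r + e) → Fin (r + d), StrictMono φ ∧ v = u ∘ φ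

/-! ## The surjection complex `X(r; 𝔽₂)` and the Barratt-Eccles complex `C(r)` -/

/-- Basis of `X(r)_d`: nondegenerate surjections of degree `d` onto `{1,…,r}`. -/
abbrev XBasis (r d : ℕ) : Type :=
  { u : Fin (r + d) → Fin r // Function.Surjective u ∧ Nondeg u }

/-- `X(r; 𝔽₂)_d`. -/
abbrev XMod (r d : ℕ) : Type := XBasis r d →₀ ZMod 2

open Classical in
/-- The bracket `[v] ∈ X(r; 𝔽₂)_e` of an arbitrary sequence `v`: the corresponding basis
element if `v` is a nondegenerate surjection, and `0` otherwise. -/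
noncomputable def xbr (r e : ℕ) (v : Fin (r + e) → Fin r) : XMod r e :=
  if h : Function.Surjective v ∧ Nondeg v then Finsupp.single ⟨v, h⟩ 1 else 0

/-- The differential `∂ : X(r; 𝔽₂)_{d+1} → X(r; 𝔽₂)_d`,
`∂[u] = Σ_p [u ∘ δ_p]` (deletion of the `p`-th entry). -/
noncomputable def xbnd (r d : ℕ) : XMod r (d + 1) →ₗ[ZMod 2] XMod r d :=
  Finsupp.lsum (ZMod 2) fun u => LinearMap.toSpanSingleton (ZMod 2) (XMod r d)
    (∑ p : Fin (r + d + 1), xbr r d fun i : Fin (r + d) => u.1 (p.succAbove i))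

/-- Basis of `C(r)_n`: nondegenerate `n`-simplices of `W(r)`, i.e. `(n+1)`-tuples of
permutations with all consecutive entries distinct. -/
abbrev CBasis (r n : ℕ) : Type :=
  { w : Fin (n + 1) → Equiv.Perm (Fin r) // ∀ i : Fin n, w i.castSucc ≠ w i.succ }

/-- `C(r; 𝔽₂)_n`, the normalized chains on `W(r)` with `𝔽₂` coefficients. -/
abbrev CMod (r n : ℕ) : Type := CBasis r n →₀ ZMod 2

open Classical in
/-- The bracket `[w_0,…,w_n] ∈ C(r; 𝔽₂)_n`: the corresponding basis element if the tuple
is nondegenerate, and `0` otherwise. -/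
noncomputable def cbr (r n : ℕ) (w : Fin (n + 1) → Equiv.Perm (Fin r)) : CMod r n :=
  if h : ∀ i : Fin n, w i.castSucc ≠ w i.succ then Finsupp.single ⟨w, h⟩ 1 else 0

/-- The differential `δ : C(r; 𝔽₂)_{n+1} → C(r; 𝔽₂)_n`,
`δ[w_0,…,w_{n+1}] = Σ_p [w_0,…,ŵ_p,…,w_{n+1}]`. -/
noncomputable def cbnd (r n : ℕ) : CMod r (n + 1) →ₗ[ZMod 2] CMod r n :=
  Finsupp.lsum (ZMod 2) fun w => LinearMap.toSpanSingleton (ZMod 2) (CMod r n)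
    (∑ p : Fin (n + 2), cbr r n fun i : Fin (n + 1) => w.1 (p.succAbove i))

open Classical in
/-- The finite set of maximal chains of the prism of `u`.  (Every maximal chain takes
values `≤ d`, since it starts at `0` and makes `d` unit steps, so it is the image of
a `Fin (d+1)`-valued function; hence this `Finset` consists exactly of the maximal
chains of the prism of `u`.) -/
noncomputable def maxChains {r d : ℕ} (u : Fin (r + d) → Fin r) :
    Finset (Fin (d + 1) → Fin r → ℕ) :=
  ((Finset.univ : Finset (Fin (d + 1) → Fin r → Fin (d + 1))).image
      fun y i k => (y i k : ℕ)).filter fun x => PrismMaxChain u x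

/-- `TC⟨u⟩` before the surjectivity test: the sum, over all maximal chains
`(x⁽⁰⁾,…,x⁽ᵈ⁾)` of the prism of `u`, of the brackets `[τ_u(x⁽⁰⁾),…,τ_u(x⁽ᵈ⁾)]`. -/
noncomputable def TCsum (r d : ℕ) (u : Fin (r + d) → Fin r) : CMod r d :=
  ∑ x ∈ maxChains u, cbr r d fun i => tauPerm u (x i)

open Classical in
/-- `TC⟨v⟩` for an arbitrary sequence `v`: the sum over maximal chains if `v` is
surjective, and `0` otherwise. -/
noncomputable def TCangle (r d : ℕ) (v : Fin (r + d) → Fin r) : CMod r d :=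
  if Function.Surjective v then TCsum r d v else 0

/-- `TC : X(r; 𝔽₂)_d → C(r; 𝔽₂)_d` as a linear map. -/
noncomputable def TCmap (r d : ℕ) : XMod r d →ₗ[ZMod 2] CMod r d :=
  Finsupp.lsum (ZMod 2) fun u => LinearMap.toSpanSingleton (ZMod 2) (CMod r d) (TCsum r d u.1)

/-- The action of a permutation `w` on `C(r; 𝔽₂)_d`, `w · [w_0,…,w_d] = [w∘w_0,…,w∘w_d]`. -/
noncomputable def permAct (r d : ℕ) (w : Equiv.Perm (Fin r)) (c : CMod r d) : CMod r d :=
  c.sum fun v a => a • cbr r d fun i => w * v.1 i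

/-! ## Integral versions -/

/-- `C(r; ℤ)_n`, the normalized chains on `W(r)` with integer coefficients. -/
abbrev CModZ (r n : ℕ) : Type := CBasis r n →₀ ℤ

open Classical in
/-- The bracket `[w_0,…,w_n] ∈ C(r; ℤ)_n`. -/
noncomputable def cbrZ (r n : ℕ) (w : Fin (n + 1) → Equiv.Perm (Fin r)) : CModZ r n :=
  if h : ∀ i : Fin n, w i.castSucc ≠ w i.succ then Finsupp.single ⟨w, h⟩ 1 else 0

/-- The differential `δ : C(r; ℤ)_{n+1} → C(r; ℤ)_n`,
`δ[w_0,…,w_{n+1}] = Σ_p (-1)^p [w_0,…,ŵ_p,…,w_{n+1}]`. -/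
noncomputable def cbndZ (r n : ℕ) : CModZ r (n + 1) →ₗ[ℤ] CModZ r n :=
  Finsupp.lsum ℤ fun w => LinearMap.toSpanSingleton ℤ (CModZ r n)
    (∑ p : Fin (n + 2), ((-1 : ℤ) ^ (p : ℕ)) • cbrZ r n fun i : Fin (n + 1) => w.1 (p.succAbove i))

/-- Concatenation `[v_0,…,v_i] ∗ (w_i,…,w_d)`: the `(d+2)`-tuple
`(v_0,…,v_i,w_i,w_{i+1},…,w_d)`. -/
def glue {r d : ℕ} (i : Fin (d + 1)) (v : Fin ((i : ℕ) + 1) → Equiv.Perm (Fin r))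
    (w : Fin (d + 1) → Equiv.Perm (Fin r)) : Fin (d + 2) → Equiv.Perm (Fin r) :=
  fun j =>
    if h : (j : ℕ) < (i : ℕ) + 1 then v ⟨j, h⟩
    else w ⟨(j : ℕ) - 1, by have := j.isLt; omega⟩

/-- The homotopy `H` associated to a degree-preserving family of linear maps `T`:
`H[w_0,…,w_d] = Σ_{i=0}^d (-1)^i T([w_0,…,w_i]) ∗ (w_i,…,w_d)`, extended linearly. -/
noncomputable def Hmap (r : ℕ) (T : ∀ n, CModZ r n →ₗ[ℤ] CModZ r n) (d : ℕ)
    (c : CModZ r d) : CModZ r (d + 1) :=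
  c.sum fun w a => a • ∑ i : Fin (d + 1), ((-1 : ℤ) ^ (i : ℕ)) •
    ((T (i : ℕ) (cbrZ r (i : ℕ) fun j : Fin ((i : ℕ) + 1) =>
        w.1 (Fin.castLE i.isLt j))).sum
      fun v b => b • cbrZ r (d + 1) (glue i v.1 w.1))

/-- `f` induces an isomorphism on homology in every degree (for `ℕ`-indexed chain
complexes of `𝔽₂`-vector spaces with differentials `dM`, `dN`): the induced map on
`H_0 = coker` and on `H_{n+1} = ker/im` is bijective. -/
def InducesHomologyIso {M N : ℕ → Type} [∀ n, AddCommGroup (M n)]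
    [∀ n, Module (ZMod 2) (M n)] [∀ n, AddCommGroup (N n)] [∀ n, Module (ZMod 2) (N n)]
    (dM : ∀ n, M (n + 1) →ₗ[ZMod 2] M n) (dN : ∀ n, N (n + 1) →ₗ[ZMod 2] N n)
    (f : ∀ n, M n →ₗ[ZMod 2] N n) : Prop :=
  (∀ y : N 0, ∃ c : M 0, f 0 c - y ∈ LinearMap.range (dN 0)) ∧
  (∀ c : M 0, f 0 c ∈ LinearMap.range (dN 0) → c ∈ LinearMap.range (dM 0)) ∧
  (∀ n, ∀ y ∈ LinearMap.ker (dN n), ∃ c ∈ LinearMap.ker (dM n),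
      f (n + 1) c - y ∈ LinearMap.range (dN (n + 1))) ∧
  (∀ n, ∀ c ∈ LinearMap.ker (dM n), f (n + 1) c ∈ LinearMap.range (dN (n + 1)) →
      c ∈ LinearMap.range (dM (n + 1)))

private lemma list_filter_succAbove {N : ℕ} (p : Fin (N + 1)) (P : Fin (N + 1) → Bool)
    (hp : P p = false) :
    (List.finRange (N + 1)).filter P
      = ((List.finRange N).filter (fun i => P (p.succAbove i))).map p.succAbove := by
  have h1 : ((List.finRange N).filter fun i => P (p.succAbove i)).map p.succAbove
      = ((List.finRange N).map p.succAbove).filter P := List.filter_map.symm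
  rw [h1]
  haveI : IsAntisymm (Fin (N + 1)) (· < ·) := ⟨fun a b h h' => absurd h' (lt_asymm h)⟩
  refine (fun h1 h2 h3 => List.Perm.eq_of_pairwise' (r := (· < ·)) h2 h3 h1) ?_ ?_ ?_
  · rw [List.perm_ext_iff_of_nodup ((List.nodup_finRange _).filter _)
      (((List.nodup_finRange _).map (p.strictMono_succAbove.injective)).filter _)]
    intro a
    simp only [List.mem_filter, List.mem_map, List.mem_finRange, true_and]
    constructor
    · intro ha
      have hne : a ≠ p := fun h => by rw [h, hp] at ha; exact absurd ha (by simp)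
      obtain ⟨z, hz⟩ := Fin.exists_succAbove_eq_iff.mpr hne
      exact ⟨⟨z, hz⟩, ha⟩
    · rintro ⟨⟨z, rfl⟩, ha⟩
      exact ha
  · exact (List.pairwise_lt_finRange _).sublist List.filter_sublist
  · exact ((List.pairwise_lt_finRange N).map _
      (fun a b h => p.strictMono_succAbove h)).sublist List.filter_sublist

theorem stmt0 (r e : ℕ) (hr : 1 ≤ r) (u : Fin (r + (e + 1)) → Fin r)
    (hu : Function.Surjective u) (k : Fin r) (hk : 2 ≤ cnt u k)
    (x : ℕ) (hx : x ≤ cnt u k - 1)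
    (p : Fin (r + (e + 1))) (hpk : u p = k)
    (hpx : (Finset.univ.filter fun q => q < p ∧ u q = k).card = x)
    (v : Fin (r + e) → Fin r)
    (hv : ∀ i : Fin (r + e), v i = if (i : ℕ) < (p : ℕ) then u i.castSucc else u i.succ) :
    Function.Surjective v ∧
    cnt v k = cnt u k - 1 ∧
    (∀ j : Fin r, j ≠ k → cnt v j = cnt u j) ∧
    ∀ y : Fin r → ℕ, IsVertex v y →
      tauList v y = tauList u (Function.update y k (if y k < x then y k else y k + 1)) := by
  have hvp : ∀ i : Fin (r + e), v i = u (p.succAbove i) := by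
    intro i
    rw [hv i, Fin.succAbove]
    rcases lt_or_ge (i : ℕ) (p : ℕ) with h | h
    · rw [if_pos h, if_pos (by simpa [Fin.lt_def] using h)]
    · rw [if_neg (by omega), if_neg (by simp only [Fin.lt_def, Fin.coe_castSucc]; omega)]
  -- counting
  have hcnt : ∀ j : Fin r, cnt u j = (if u p = j then 1 else 0) + cnt v j := by
    intro j
    rw [cnt, cnt, Finset.card_filter, Finset.card_filter]
    exact (Fin.sum_univ_succAbove
        (fun q : Fin (r + (e + 1)) => if u q = j then (1 : ℕ) else 0) p).trans
      (by exact congrArg _ (Finset.sum_congr rfl fun i _ => by rw [hvp i]))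
  have hcntk : cnt v k = cnt u k - 1 := by
    have := hcnt k; rw [if_pos hpk] at this; omega
  have hcntj : ∀ j : Fin r, j ≠ k → cnt v j = cnt u j := by
    intro j hj
    have := hcnt j
    rw [if_neg (fun h : u p = j => hj (h ▸ hpk))] at this
    omega
  have hsurj : Function.Surjective v := by
    intro j
    have h1 : 1 ≤ cnt u j := by
      obtain ⟨q, hq⟩ := hu j
      exact Finset.card_pos.mpr ⟨q, Finset.mem_filter.mpr ⟨Finset.mem_univ _, hq⟩⟩
    have h2 : 1 ≤ cnt v j := by
      by_cases hj : j = k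
      · rw [hj, hcntk]; rw [hj] at h1; omega
      · rw [hcntj j hj]; exact h1
    have h2' : 0 < (Finset.univ.filter fun i => v i = j).card := h2
    obtain ⟨i, hi⟩ := Finset.card_pos.mp h2'
    exact ⟨i, (Finset.mem_filter.mp hi).2⟩
  refine ⟨hsurj, hcntk, hcntj, ?_⟩
  -- key counting transfer
  have key : ∀ i : Fin (r + e),
      ((Finset.univ : Finset (Fin (r + (e + 1)))).filter
          fun q => q < p.succAbove i ∧ u q = u (p.succAbove i)).card
        = (Finset.univ.filter fun q => q < i ∧ v q = v i).card
          + (if p < p.succAbove i ∧ u p = v i then 1 else 0) := by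
    intro i
    rw [Finset.card_filter, Finset.card_filter]
    refine Eq.trans (Fin.sum_univ_succAbove (fun q : Fin (r + (e + 1)) =>
      if q < p.succAbove i ∧ u q = u (p.succAbove i) then (1 : ℕ) else 0) p) ?_
    rw [add_comm]
    congr 1
    · exact Finset.sum_congr rfl fun q _ => by
        simp only [hvp, Fin.succAbove_lt_succAbove_iff]
    · rw [hvp i]
  -- comparison of x with the local count, for positions carrying the value k
  have comp : ∀ i : Fin (r + e), v i = k →
      (p < p.succAbove i ↔ x ≤ (Finset.univ.filter fun q => q < i ∧ v q = v i).card) := by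
    intro i hvi
    have hci : (Finset.univ.filter fun q => q < i ∧ v q = v i).card
        = ∑ q : Fin (r + (e + 1)), if q ≠ p ∧ q < p.succAbove i ∧ u q = k then 1 else 0 := by
      rw [Finset.card_filter]
      refine Eq.symm (Eq.trans (Fin.sum_univ_succAbove (fun q : Fin (r + (e + 1)) =>
        if q ≠ p ∧ q < p.succAbove i ∧ u q = k then (1 : ℕ) else 0) p) ?_)
      rw [if_neg (by simp), zero_add]
      exact Finset.sum_congr rfl fun q _ => by
        rw [hvi]
        simp only [hvp, Fin.succAbove_lt_succAbove_iff, ne_eq, Fin.succAbove_ne p q,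
          not_false_iff, true_and]
    constructor
    · intro hlt
      rw [hci, ← hpx, Finset.card_filter]
      apply Finset.sum_le_sum
      intro q _
      by_cases h : q < p ∧ u q = k
      · rw [if_pos h, if_pos ⟨ne_of_lt h.1, lt_trans h.1 hlt, h.2⟩]
      · rw [if_neg h]; exact Nat.zero_le _
    · intro hle
      by_contra hlt
      have hne : p.succAbove i ≠ p := Fin.succAbove_ne p i
      have hlt' : p.succAbove i < p := lt_of_le_of_ne (not_lt.mp hlt) hne
      have hsplit : (Finset.univ.filter fun q => q ≤ i ∧ v q = v i)
          = insert i (Finset.univ.filter fun q => q < i ∧ v q = v i) := by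
        ext q
        simp only [Finset.mem_insert, Finset.mem_filter, Finset.mem_univ, true_and]
        constructor
        · rintro ⟨hq, hq'⟩
          rcases lt_or_eq_of_le hq with h | h
          · exact Or.inr ⟨h, hq'⟩
          · exact Or.inl h
        · rintro (rfl | ⟨h, h'⟩)
          · exact ⟨le_refl _, rfl⟩
          · exact ⟨le_of_lt h, h'⟩
      have hcard : (Finset.univ.filter fun q => q ≤ i ∧ v q = v i).card
          = (Finset.univ.filter fun q => q < i ∧ v q = v i).card + 1 := by
        rw [hsplit, Finset.card_insert_of_notMem (by simp)]
      have hle2 : (Finset.univ.filter fun q => q ≤ i ∧ v q = v i).card ≤ x := by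
        have hc2 : (Finset.univ.filter fun q => q ≤ i ∧ v q = v i).card
            = ∑ q : Fin (r + (e + 1)),
              if q ≠ p ∧ q ≤ p.succAbove i ∧ u q = k then 1 else 0 := by
          rw [Finset.card_filter]
          refine Eq.symm (Eq.trans (Fin.sum_univ_succAbove (fun q : Fin (r + (e + 1)) =>
            if q ≠ p ∧ q ≤ p.succAbove i ∧ u q = k then (1 : ℕ) else 0) p) ?_)
          rw [if_neg (by simp), zero_add]
          exact Finset.sum_congr rfl fun q _ => by
            rw [hvi]
            simp only [hvp, Fin.succAbove_le_succAbove_iff, ne_eq, Fin.succAbove_ne p q,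
              not_false_iff, true_and]
        rw [hc2, ← hpx, Finset.card_filter]
        apply Finset.sum_le_sum
        intro q _
        by_cases h : q ≠ p ∧ q ≤ p.succAbove i ∧ u q = k
        · rw [if_pos h, if_pos ⟨lt_of_le_of_lt h.2.1 hlt', h.2.2⟩]
        · rw [if_neg h]; exact Nat.zero_le _
      omega
  intro y hy
  set y' := Function.update y k (if y k < x then y k else y k + 1) with hy'
  have hy'k : y' k = if y k < x then y k else y k + 1 := by
    rw [hy', Function.update_self]
  have hy'j : ∀ j : Fin r, j ≠ k → y' j = y j := fun j hj => Function.update_of_ne hj _ _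
  have selP : ¬ IsSel u y' p := by
    intro hsel
    rw [IsSel, hpk, hpx, hy'k] at hsel
    split_ifs at hsel <;> omega
  have selIff : ∀ i : Fin (r + e), IsSel v y i ↔ IsSel u y' (p.succAbove i) := by
    intro i
    show (Finset.univ.filter fun q => q < i ∧ v q = v i).card = y (v i) ↔
      ((Finset.univ : Finset (Fin (r + (e + 1)))).filter
        fun q => q < p.succAbove i ∧ u q = u (p.succAbove i)).card = y' (u (p.succAbove i))
    rw [key i, ← hvp i]
    by_cases hvi : v i = k
    · rw [hvi, hpk, hy'k]
      have hc := comp i hvi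
      rw [hvi] at hc
      by_cases hlt : p < p.succAbove i
      · rw [if_pos ⟨hlt, rfl⟩]
        have h1 := hc.mp hlt
        split_ifs with hxy <;> constructor <;> intro h <;> omega
      · rw [if_neg (fun h => hlt h.1), add_zero]
        have h1 := (not_congr hc).mp hlt
        split_ifs with hxy <;> constructor <;> intro h <;> omega
    · rw [if_neg (fun h => hvi (by rw [← h.2, hpk])), add_zero, hy'j (v i) hvi]
  have h3 := list_filter_succAbove (N := r + e) p
    (fun q => decide (IsSel u y' q)) (decide_eq_false selP)
  have h4 : List.map v ((List.finRange (r + e)).filter fun p' => decide (IsSel v y p'))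
      = List.map u (((List.finRange (r + e)).filter
          fun i => decide (IsSel u y' (p.succAbove i))).map p.succAbove) := by
    rw [List.map_map]
    rw [show u ∘ p.succAbove = v from funext fun q => (hvp q).symm]
    congr 1
    exact List.filter_congr fun i _ => by
      simp only [decide_eq_decide]; exact selIff i
  exact h4.trans (congrArg (List.map u) h3).symm
end

section
/- For every r ≥ 1, every n ≥ 0 and every (n+1)-tuple (w_0,…,w_n) of permutations of {1,…,r}, there exist an integer d ≥ 0, a nondegenerate surjection u of degree d onto {1,…,r}, and vertices x^{(0)}, …, x^{(n)} of the prism of u with x^{(i)} ≤ x^{(i+1)} componentwise, such that τ_u(x^{(i)}) = w_i for all 0 ≤ i ≤ n. In other words, the images of the prisms of nondegenerate surjections cover the simplicial set W(r). -/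
-- window lemma
theorem window {m r : ℕ} (u : Fin m → Fin r) (w : Equiv.Perm (Fin r)) (p : ℕ)
    (hp : p + r ≤ m) (hw : ∀ j : Fin r, u ⟨p + j, by omega⟩ = w j) (x : Fin r → ℕ)
    (hx : ∀ k, x k = (Finset.univ.filter fun q : Fin m => (q : ℕ) < p ∧ u q = k).card) :
    IsVertex u x ∧ tauPerm u x = w := by
  -- window positions
  have hwin : ∀ j : Fin r, IsSel u x ⟨p + j, by omega⟩ := by
    intro j
    unfold IsSel
    have hu : u ⟨p + j, by omega⟩ = w j := hw j
    rw [hu, hx]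
    congr 1
    apply Finset.ext
    intro q'
    simp only [Finset.mem_filter, Finset.mem_univ, true_and]
    constructor
    · rintro ⟨hlt, heq⟩
      have hlt' : (q' : ℕ) < p + (j : ℕ) := hlt
      constructor
      · by_contra hge
        push_neg at hge
        set j' : Fin r := ⟨(q' : ℕ) - p, by omega⟩ with hj'
        have : q' = ⟨p + j', by omega⟩ := by
          apply Fin.ext; simp [hj']; omega
        rw [this, hw j'] at heq
        have : j' = j := w.injective heq
        have : (j' : ℕ) = (j : ℕ) := by rw [this]
        simp [hj'] at this
        omega
      · exact heq
    · rintro ⟨hlt, heq⟩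
      refine ⟨?_, heq⟩
      show (q' : ℕ) < p + (j : ℕ)
      omega
  -- positions before window
  have hbefore : ∀ q : Fin m, (q : ℕ) < p → ¬ IsSel u x q := by
    intro q hq
    unfold IsSel
    rw [hx]
    apply Nat.ne_of_lt
    apply Finset.card_lt_card
    constructor
    · intro q' hq'
      simp only [Finset.mem_filter, Finset.mem_univ, true_and] at hq' ⊢
      exact ⟨by have : (q' : ℕ) < (q : ℕ) := hq'.1; omega, hq'.2⟩
    · intro hsub
      have := hsub (by simp [hq] : q ∈ _)
      simp only [Finset.mem_filter, Finset.mem_univ, true_and] at this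
      exact absurd this.1 (lt_irrefl q)
  -- positions after window
  have hafter : ∀ q : Fin m, p + r ≤ (q : ℕ) → ¬ IsSel u x q := by
    intro q hq
    unfold IsSel
    rw [hx]
    apply Nat.ne_of_gt
    apply Finset.card_lt_card
    constructor
    · intro q' hq'
      simp only [Finset.mem_filter, Finset.mem_univ, true_and] at hq' ⊢
      refine ⟨?_, hq'.2⟩
      show (q' : ℕ) < (q : ℕ)
      have := hq'.1; omega
    · intro hsub
      set j : Fin r := w.symm (u q) with hj
      have hmem : (⟨p + j, by omega⟩ : Fin m) ∈
          Finset.univ.filter fun q' : Fin m => q' < q ∧ u q' = u q := by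
        simp only [Finset.mem_filter, Finset.mem_univ, true_and]
        refine ⟨?_, by rw [hw j, hj]; simp⟩
        show p + (j : ℕ) < (q : ℕ)
        have := j.isLt; omega
      have := hsub hmem
      simp only [Finset.mem_filter, Finset.mem_univ, true_and] at this
      omega
  have hvert : IsVertex u x := by
    intro k
    rw [hx k]
    apply Finset.card_lt_card
    constructor
    · intro q' hq'
      simp only [Finset.mem_filter, Finset.mem_univ, true_and] at hq' ⊢
      exact hq'.2
    · intro hsub
      set j : Fin r := w.symm k with hj
      have hmem : (⟨p + j, by omega⟩ : Fin m) ∈ Finset.univ.filter fun q : Fin m => u q = k := by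
        simp only [Finset.mem_filter, Finset.mem_univ, true_and]
        rw [hw j, hj]; simp
      have := hsub hmem
      simp only [Finset.mem_filter, Finset.mem_univ, true_and] at this
      omega
  refine ⟨hvert, ?_⟩
  -- the list of selected positions
  have hlist : (List.finRange m).filter (fun q => decide (IsSel u x q)) =
      (List.finRange r).map (fun j : Fin r => (⟨p + j, by omega⟩ : Fin m)) := by
    haveI : IsAntisymm (Fin m) (· < ·) := ⟨fun a b h h' => absurd h' (asymm h)⟩
    refine (fun hp h1 h2 => List.Perm.eq_of_pairwise' (r := (· < ·)) h1 h2 hp) ?_ ?_ ?_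
    · rw [List.perm_ext_iff_of_nodup
        ((List.nodup_finRange m).filter _)
        (List.Nodup.map (fun a b hab => by
          have : p + (a : ℕ) = p + (b : ℕ) := congrArg Fin.val hab
          exact Fin.ext (by omega)) (List.nodup_finRange r))]
      intro q
      simp only [List.mem_filter, List.mem_finRange, true_and, List.mem_map,
        decide_eq_true_eq]
      constructor
      · intro hsel
        have h1 : p ≤ (q : ℕ) := by
          by_contra h; exact hbefore q (by omega) hsel
        have h2 : (q : ℕ) < p + r := by
          by_contra h; exact hafter q (by omega) hsel
        exact ⟨⟨(q : ℕ) - p, by omega⟩, by apply Fin.ext; simp; omega⟩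
      · rintro ⟨j, rfl⟩
        exact hwin j
    · exact (List.pairwise_lt_finRange m).filter _
    · apply List.Pairwise.map
      · intro a b (hab : a < b)
        show p + (a : ℕ) < p + (b : ℕ)
        have : (a : ℕ) < (b : ℕ) := hab
        omega
      · exact List.pairwise_lt_finRange r
  have htl : tauList u x = (List.finRange r).map ⇑w := by
    unfold tauList
    rw [hlist, List.map_map]
    apply List.map_congr_left
    intro j _
    exact hw j
  have htf : tauFun u x = ⇑w := by
    funext j
    unfold tauFun
    rw [htl]
    have hlen : (j : ℕ) < ((List.finRange r).map ⇑w).length := by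
      simp [j.isLt]
    rw [List.getD_eq_getElem _ _ hlen]
    simp
  have hbij : Function.Bijective (tauFun u x) := htf ▸ w.bijective
  unfold tauPerm
  rw [dif_pos hbij]
  apply Equiv.ext
  intro j
  show tauFun u x j = w j
  rw [htf]

def myPick {r : ℕ} (a : Fin (r + 2)) : Fin (r + 2) := if a = 0 then 1 else 0

lemma myPick_ne {r : ℕ} (a : Fin (r + 2)) : myPick a ≠ a := by
  unfold myPick
  split
  · rename_i h; rw [h]; exact one_ne_zero
  · rename_i h; exact Ne.symm h

def lastI {r : ℕ} : Fin (r + 2) := ⟨r + 1, by omega⟩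

def seg (r n : ℕ) (w : Fin (n + 1) → Equiv.Perm (Fin (r + 2))) (i : Fin (n + 1)) :
    List (Fin (r + 2)) :=
  List.ofFn ⇑(w i) ++
    if h : (i : ℕ) < n then
      (if w i lastI = w ⟨(i : ℕ) + 1, by omega⟩ 0 then [myPick (w i lastI)] else [])
    else []

def bigL (r n : ℕ) (w : Fin (n + 1) → Equiv.Perm (Fin (r + 2))) : List (Fin (r + 2)) :=
  (List.ofFn (seg r n w)).flatten

def pos (r n : ℕ) (w : Fin (n + 1) → Equiv.Perm (Fin (r + 2))) (i : ℕ) : ℕ :=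
  (((List.ofFn (seg r n w)).map List.length).take i).sum

lemma seg_len_ge (r n : ℕ) (w : Fin (n + 1) → Equiv.Perm (Fin (r + 2))) (i : Fin (n + 1)) :
    r + 2 ≤ (seg r n w i).length := by
  unfold seg
  rw [List.length_append, List.length_ofFn]
  omega

lemma pos_succ (r n : ℕ) (w : Fin (n + 1) → Equiv.Perm (Fin (r + 2))) (i : Fin (n + 1)) :
    pos r n w ((i : ℕ) + 1) = pos r n w (i : ℕ) + (seg r n w i).length := by
  unfold pos
  rw [List.take_succ, List.sum_append]
  congr 1
  have h : (i : ℕ) < ((List.ofFn (seg r n w)).map List.length).length := by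
    simp [i.isLt]
  rw [List.getElem?_eq_getElem h, Option.toList_some, List.sum_cons, List.sum_nil,
    List.getElem_map, List.getElem_ofFn]
  simp only [Fin.eta, Nat.add_zero]

lemma pos_le_len (r n : ℕ) (w : Fin (n + 1) → Equiv.Perm (Fin (r + 2))) (k : ℕ) :
    pos r n w k ≤ (bigL r n w).length := by
  unfold pos bigL
  rw [List.length_flatten]
  calc (((List.ofFn (seg r n w)).map List.length).take k).sum
      ≤ (((List.ofFn (seg r n w)).map List.length).take k).sum
        + (((List.ofFn (seg r n w)).map List.length).drop k).sum := Nat.le_add_right _ _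
    _ = _ := by rw [← List.sum_append, List.take_append_drop]

lemma window_get (r n : ℕ) (w : Fin (n + 1) → Equiv.Perm (Fin (r + 2))) (i : Fin (n + 1))
    (j : Fin (r + 2)) (h : pos r n w (i : ℕ) + (j : ℕ) < (bigL r n w).length) :
    (bigL r n w)[pos r n w (i : ℕ) + (j : ℕ)] = w i j := by
  have hdrop : (bigL r n w).drop (pos r n w (i : ℕ)) =
      ((List.ofFn (seg r n w)).drop (i : ℕ)).flatten := by
    unfold bigL pos
    exact List.drop_sum_flatten _ _
  have hlen : (i : ℕ) < (List.ofFn (seg r n w)).length := by simp [i.isLt]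
  have hcons : (List.ofFn (seg r n w)).drop (i : ℕ) =
      seg r n w i :: (List.ofFn (seg r n w)).drop ((i : ℕ) + 1) := by
    rw [List.drop_eq_getElem_cons hlen]
    congr 1
    rw [List.getElem_ofFn]
  have hj : (j : ℕ) < (seg r n w i).length := by
    have := seg_len_ge r n w i; have := j.isLt; omega
  have hjl : (j : ℕ) < ((bigL r n w).drop (pos r n w (i : ℕ))).length := by
    rw [List.length_drop]; omega
  have h1 : ((bigL r n w).drop (pos r n w (i : ℕ)))[(j : ℕ)]'hjl
      = (bigL r n w)[pos r n w (i : ℕ) + (j : ℕ)] := List.getElem_drop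
  rw [← h1]
  have heq : (bigL r n w).drop (pos r n w (i : ℕ)) =
      seg r n w i ++ ((List.ofFn (seg r n w)).drop ((i : ℕ) + 1)).flatten := by
    rw [hdrop, hcons, List.flatten_cons]
  rw [List.getElem_of_eq heq hjl, List.getElem_append_left hj]
  have hseg : (seg r n w i)[(j : ℕ)]'hj =
      (List.ofFn ⇑(w i))[(j : ℕ)]'(by rw [List.length_ofFn]; exact j.isLt) :=
    List.getElem_append_left (by rw [List.length_ofFn]; exact j.isLt)
  rw [hseg, List.getElem_ofFn]

lemma ofFn_getLast (r n : ℕ) (w : Fin (n + 1) → Equiv.Perm (Fin (r + 2))) (i : Fin (n + 1)) :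
    (List.ofFn ⇑(w i)).getLast? = some (w i lastI) := by
  rw [List.getLast?_eq_getElem?, List.length_ofFn]
  rw [List.getElem?_eq_getElem (by rw [List.length_ofFn]; omega), List.getElem_ofFn]
  rfl

lemma seg_head (r n : ℕ) (w : Fin (n + 1) → Equiv.Perm (Fin (r + 2))) (i : Fin (n + 1)) :
    (seg r n w i).head? = some (w i 0) := by
  unfold seg
  rw [List.head?_eq_getElem?, List.getElem?_append_left (by rw [List.length_ofFn]; omega),
    List.getElem?_eq_getElem (by rw [List.length_ofFn]; omega), List.getElem_ofFn]
  rfl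

lemma seg_chain (r n : ℕ) (w : Fin (n + 1) → Equiv.Perm (Fin (r + 2))) (i : Fin (n + 1)) :
    List.Chain' (· ≠ ·) (seg r n w i) := by
  unfold seg
  show List.IsChain _ _
  rw [List.isChain_append]
  refine ⟨List.Pairwise.isChain (List.nodup_ofFn.2 (w i).injective), ?_, ?_⟩
  · split
    · split
      · exact List.isChain_singleton _
      · exact List.isChain_nil
    · exact List.isChain_nil
  · intro a ha y hy
    rw [ofFn_getLast] at ha
    have ha' : a = w i lastI := by injection ha with h; exact h.symm
    subst ha'
    revert hy
    split
    · split
      · intro hy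
        simp only [List.head?_cons, Option.mem_def, Option.some.injEq] at hy
        subst hy
        exact Ne.symm (myPick_ne _)
      · intro hy; simp at hy
    · intro hy; simp at hy

lemma big_chain (r n : ℕ) (w : Fin (n + 1) → Equiv.Perm (Fin (r + 2))) :
    List.Chain' (· ≠ ·) (bigL r n w) := by
  unfold bigL
  have hne : [] ∉ List.ofFn (seg r n w) := by
    intro hmem
    rw [List.mem_ofFn] at hmem
    obtain ⟨i, hi⟩ := hmem
    have := seg_len_ge r n w i
    rw [hi] at this
    simp at this
  show List.IsChain _ _
  rw [List.isChain_flatten hne]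
  constructor
  · intro l hl
    rw [List.mem_ofFn] at hl
    obtain ⟨i, hi⟩ := hl
    rw [← hi]
    exact seg_chain r n w i
  · rw [List.isChain_iff_getElem]
    intro t ht
    simp only [List.length_ofFn] at ht
    simp only [List.get_eq_getElem, List.getElem_ofFn]
    intro a ha y hy
    have htn : t < n := by omega
    set i0 : Fin (n + 1) := ⟨t, by omega⟩ with hi0
    set i1 : Fin (n + 1) := ⟨t + 1, by omega⟩ with hi1
    rw [seg_head] at hy
    have hy' : y = w i1 0 := by injection hy with h; exact h.symm
    subst hy'
    revert ha
    unfold seg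
    simp only [hi0]
    rw [dif_pos (show ((⟨t, by omega⟩ : Fin (n+1)) : ℕ) < n from htn)]
    split
    · rename_i hc
      rw [List.getLast?_concat]
      intro ha
      have ha' : a = myPick (w ⟨t, by omega⟩ lastI) := by injection ha with h; exact h.symm
      subst ha'
      rw [hc]
      exact myPick_ne _
    · rename_i hc
      rw [List.append_nil, ofFn_getLast]
      intro ha
      have ha' : a = w ⟨t, by omega⟩ lastI := by injection ha with h; exact h.symm
      subst ha'
      exact hc

lemma pos_succ' (r n : ℕ) (w : Fin (n + 1) → Equiv.Perm (Fin (r + 2))) (i : ℕ) (h : i < n + 1) :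
    pos r n w (i + 1) = pos r n w i + (seg r n w ⟨i, h⟩).length := pos_succ r n w ⟨i, h⟩

lemma seg_len_ge' (r n : ℕ) (w : Fin (n + 1) → Equiv.Perm (Fin (r + 2))) (i : ℕ)
    (h : i < n + 1) : r + 2 ≤ (seg r n w ⟨i, h⟩).length := seg_len_ge r n w ⟨i, h⟩

theorem stmt2 (r n : ℕ) (hr : 1 ≤ r) (w : Fin (n + 1) → Equiv.Perm (Fin r)) :
    ∃ (d : ℕ) (u : Fin (r + d) → Fin r), Function.Surjective u ∧ Nondeg u ∧
      ∃ x : Fin (n + 1) → Fin r → ℕ,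
        (∀ i, IsVertex u (x i)) ∧
        (∀ i : Fin n, ∀ k, x i.castSucc k ≤ x i.succ k) ∧
        ∀ i, tauPerm u (x i) = w i := by
  rcases r with _ | _ | r
  · omega
  · -- r = 1
    clear hr
    haveI hsub : Subsingleton (Fin 1) := ⟨fun a b => by omega⟩
    refine ⟨0, fun _ => 0, fun k => ⟨0, Subsingleton.elim _ _⟩, fun i h => absurd h (by omega),
      fun _ _ => 0, ?_, fun _ _ => le_refl 0, ?_⟩
    · intro i k
      show 0 < cnt (fun _ => (0 : Fin 1)) k
      unfold cnt
      rw [Finset.filter_true_of_mem (fun q _ => Subsingleton.elim _ _)]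
      simp
    · intro i
      exact Subsingleton.elim _ _
  · -- r ≥ 2
    clear hr
    have hm : r + 2 ≤ (bigL r n w).length := by
      have hlt : (0 : ℕ) < n + 1 := Nat.succ_pos n
      have h1 := pos_le_len r n w 1
      have h2 := pos_succ' r n w 0 hlt
      rw [Nat.zero_add] at h2
      have h3 := seg_len_ge' r n w 0 hlt
      have h0 : pos r n w 0 = 0 := rfl
      omega
    obtain ⟨d, hd⟩ : ∃ d, (bigL r n w).length = r + 2 + d :=
      ⟨(bigL r n w).length - (r + 2), by omega⟩
    refine ⟨d, fun q => (bigL r n w)[(q : ℕ)]'(by rw [hd]; exact q.isLt), ?_, ?_, ?_⟩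
    · -- surjective
      intro k
      set i0 : Fin (n + 1) := ⟨0, Nat.succ_pos n⟩ with hi0
      have hp : pos r n w 0 + (((w i0).symm k : ℕ)) < r + 2 + d := by
        have hlt : (0 : ℕ) < n + 1 := Nat.succ_pos n
        have h1 := pos_le_len r n w 1
        have h2 := pos_succ' r n w 0 hlt
        rw [Nat.zero_add] at h2
        have h3 := seg_len_ge' r n w 0 hlt
        have h0 : pos r n w 0 = 0 := rfl
        have h4 := ((w i0).symm k).isLt
        omega
      refine ⟨⟨pos r n w 0 + (((w i0).symm k : ℕ)), hp⟩, ?_⟩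
      exact (window_get r n w i0 ((w i0).symm k) (by rw [hd]; exact hp)).trans
        (Equiv.apply_symm_apply (w i0) k)
    · -- nondegenerate
      intro i h
      have hch := List.isChain_iff_getElem.1 (big_chain r n w) i (by rw [hd]; omega)
      exact Ne.symm hch
    · -- vertices
      have key : ∀ i : Fin (n + 1),
          IsVertex (fun q : Fin (r + 2 + d) => (bigL r n w)[(q : ℕ)]'(by rw [hd]; exact q.isLt))
            (fun k => (Finset.univ.filter fun q : Fin (r + 2 + d) =>
              (q : ℕ) < pos r n w (i : ℕ) ∧
                (bigL r n w)[(q : ℕ)]'(by rw [hd]; exact q.isLt) = k).card) ∧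
          tauPerm (fun q : Fin (r + 2 + d) => (bigL r n w)[(q : ℕ)]'(by rw [hd]; exact q.isLt))
            (fun k => (Finset.univ.filter fun q : Fin (r + 2 + d) =>
              (q : ℕ) < pos r n w (i : ℕ) ∧
                (bigL r n w)[(q : ℕ)]'(by rw [hd]; exact q.isLt) = k).card) = w i := by
        intro i
        have hpi : pos r n w (i : ℕ) + (r + 2) ≤ r + 2 + d := by
          have hlt : (i : ℕ) < n + 1 := i.isLt
          have h1 := pos_le_len r n w ((i : ℕ) + 1)
          have h2 := pos_succ' r n w (i : ℕ) hlt
          have h3 := seg_len_ge' r n w (i : ℕ) hlt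
          omega
        exact window (fun q : Fin (r + 2 + d) => (bigL r n w)[(q : ℕ)]'(by rw [hd]; exact q.isLt))
          (w i) (pos r n w (i : ℕ)) hpi
          (fun j => window_get r n w i j (by rw [hd]; have := j.isLt; omega))
          _ (fun k => rfl)
      refine ⟨fun i k => (Finset.univ.filter fun q : Fin (r + 2 + d) =>
          (q : ℕ) < pos r n w (i : ℕ) ∧
            (bigL r n w)[(q : ℕ)]'(by rw [hd]; exact q.isLt) = k).card,
        fun i => (key i).1, ?_, fun i => (key i).2⟩
      intro i k
      apply Finset.card_le_card
      intro q hq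
      simp only [Finset.mem_filter, Finset.mem_univ, true_and] at hq ⊢
      refine ⟨?_, hq.2⟩
      have h1 : (q : ℕ) < pos r n w (i : ℕ) := hq.1
      have h2 := pos_succ' r n w (i : ℕ) (Nat.lt_succ_of_lt i.isLt)
      show (q : ℕ) < pos r n w ((i : ℕ) + 1)
      omega
end

section
/- Let u be a nondegenerate surjection of degree d onto {1,…,r}. Then: (i) the caesura sequence of u has length d and contains each value k ∈ {1,…,r} exactly d_k(u)−1 times, so the fundamental chain x^{(0)}, …, x^{(d)} of u is a maximal chain of the prism of u; (ii) τ_u(x^{(i)}) ≠ τ_u(x^{(i+1)}) for all 0 ≤ i ≤ d−1, i.e., the fundamental simplex (τ_u(x^{(0)}),…,τ_u(x^{(d)})) of the prism of u is a nondegenerate d-simplex of W(r) (a tuple of permutations with all consecutive entries distinct). -/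
namespace Stmt5Aux

variable {n r : ℕ}

lemma length_filter_finRange {n : ℕ} (p : Fin n → Bool) :
    ((List.finRange n).filter p).length = (Finset.univ.filter (fun i => p i = true)).card := by
  rw [← List.toFinset_card_of_nodup (((List.nodup_finRange n).filter p)),
    List.toFinset_filter, List.toFinset_finRange]

lemma filter_lt_getElem_length {n : ℕ} {L : List (Fin n)} (hL : L.Pairwise (· < ·)) {a : ℕ}
    (ha : a < L.length) : (L.filter (fun x => decide (x < L[a]))).length = a := by
  have hmono := hL.sortedLT.strictMono_get
  obtain ⟨c, hc⟩ : ∃ c, L[a] = c := ⟨_, rfl⟩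
  rw [hc]
  have h1 : (L.take a).filter (fun x => decide (x < c)) = L.take a := by
    apply List.filter_eq_self.mpr
    intro x hx
    rw [List.mem_take_iff_getElem] at hx
    obtain ⟨i, hm, rfl⟩ := hx
    simp only [decide_eq_true_iff, ← hc]
    exact hmono (show (⟨i, by omega⟩ : Fin L.length) < ⟨a, ha⟩ by
      simp [Fin.lt_def]; omega)
  have h2 : (L.drop a).filter (fun x => decide (x < c)) = [] := by
    apply List.filter_eq_nil_iff.mpr
    intro x hx
    rw [List.mem_iff_getElem] at hx
    obtain ⟨i, hm, rfl⟩ := hx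
    rw [List.getElem_drop]
    simp only [decide_eq_true_iff, not_lt, ← hc]
    exact hmono.monotone (show (⟨a, ha⟩ : Fin L.length) ≤ ⟨a + i, by
      have := hm; simp [List.length_drop] at this; omega⟩ by simp [Fin.le_def])
  conv_lhs => rw [← List.take_append_drop a L]
  rw [List.filter_append, h1, h2, List.append_nil, List.length_take]
  omega

lemma mem_sorted_getElem {n : ℕ} {L : List (Fin n)} (hL : L.Pairwise (· < ·)) {q : Fin n}
    (hq : q ∈ L) : ∃ h : (L.filter (fun x => decide (x < q))).length < L.length,
      L[(L.filter (fun x => decide (x < q))).length] = q := by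
  rw [List.mem_iff_getElem] at hq
  obtain ⟨a, ha, rfl⟩ := hq
  rw [filter_lt_getElem_length hL ha]
  exact ⟨ha, rfl⟩

/-- The sorted list of positions of occurrences of the value `j`. -/
def Fjl (u : Fin n → Fin r) (j : Fin r) : List (Fin n) :=
  (List.finRange n).filter (fun p => decide (u p = j))

lemma Fjl_sorted (u : Fin n → Fin r) (j : Fin r) : (Fjl u j).Pairwise (· < ·) :=
  (List.pairwise_lt_finRange n).sublist List.filter_sublist

lemma Fjl_nodup (u : Fin n → Fin r) (j : Fin r) : (Fjl u j).Nodup :=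
  (List.nodup_finRange n).filter _

lemma mem_Fjl {u : Fin n → Fin r} {j : Fin r} {p : Fin n} : p ∈ Fjl u j ↔ u p = j := by
  simp [Fjl, List.mem_filter]

lemma Fjl_length (u : Fin n → Fin r) (j : Fin r) : (Fjl u j).length = cnt u j := by
  rw [Fjl, length_filter_finRange]; simp [cnt]

lemma cntB (u : Fin n → Fin r) (p : Fin n) :
    (Finset.univ.filter fun q => q < p ∧ u q = u p).card
      = ((Fjl u (u p)).filter fun s => decide (s < p)).length := by
  rw [Fjl, List.filter_filter, length_filter_finRange]
  apply congrArg Finset.card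
  ext q
  simp [and_comm]

lemma occ_count (u : Fin n → Fin r) (j : Fin r) (a : ℕ) (ha : a < (Fjl u j).length) :
    (Finset.univ.filter fun q => q < (Fjl u j)[a] ∧ u q = u ((Fjl u j)[a])).card = a := by
  have hj : u ((Fjl u j)[a]) = j := mem_Fjl.mp (List.getElem_mem _)
  rw [cntB, hj]
  exact filter_lt_getElem_length (Fjl_sorted u j) ha

lemma occ_unique {u : Fin n → Fin r} {p : Fin n} {a : ℕ}
    (h : (Finset.univ.filter fun q => q < p ∧ u q = u p).card = a) :
    ∃ ha : a < (Fjl u (u p)).length, (Fjl u (u p))[a] = p := by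
  have hp : p ∈ Fjl u (u p) := mem_Fjl.mpr rfl
  obtain ⟨hlen, hget⟩ := mem_sorted_getElem (Fjl_sorted u (u p)) hp
  rw [cntB] at h
  subst h
  exact ⟨hlen, hget⟩

lemma isSel_unique {u : Fin n → Fin r} {x : Fin r → ℕ} {p p' : Fin n}
    (h1 : IsSel u x p) (h2 : IsSel u x p') (hup : u p = u p') : p = p' := by
  obtain ⟨ha1, hg1⟩ := occ_unique (h1 : _ = x (u p))
  obtain ⟨ha2, hg2⟩ := occ_unique (h2 : _ = x (u p'))
  simp only [hup] at hg1
  exact hg1.symm.trans hg2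

/-- The sorted list of selected positions of the vertex `x`. -/
def Sli (u : Fin n → Fin r) (x : Fin r → ℕ) : List (Fin n) :=
  (List.finRange n).filter fun p => decide (IsSel u x p)

lemma tauList_eq (u : Fin n → Fin r) (x : Fin r → ℕ) : tauList u x = (Sli u x).map u := rfl

lemma Sli_sorted (u : Fin n → Fin r) (x : Fin r → ℕ) : (Sli u x).Pairwise (· < ·) :=
  (List.pairwise_lt_finRange n).sublist List.filter_sublist

lemma Sli_nodup (u : Fin n → Fin r) (x : Fin r → ℕ) : (Sli u x).Nodup :=
  (List.nodup_finRange n).filter _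

lemma mem_Sli {u : Fin n → Fin r} {x : Fin r → ℕ} {p : Fin n} :
    p ∈ Sli u x ↔ IsSel u x p := by simp [Sli, List.mem_filter]

lemma isSel_occ (u : Fin n → Fin r) (x : Fin r → ℕ) (j : Fin r)
    (h : x j < (Fjl u j).length) : IsSel u x ((Fjl u j)[x j]) := by
  have hj : u ((Fjl u j)[x j]) = j := mem_Fjl.mp (List.getElem_mem _)
  unfold IsSel
  rw [occ_count u j (x j) h, hj]

lemma vertex_lt_Fjl {u : Fin n → Fin r} {x : Fin r → ℕ} (hx : IsVertex u x) (j : Fin r) :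
    x j < (Fjl u j).length := by rw [Fjl_length]; exact hx j

lemma Sli_length {u : Fin n → Fin r} {x : Fin r → ℕ} (hx : IsVertex u x) :
    (Sli u x).length = r := by
  rw [Sli, length_filter_finRange]
  have himg : Finset.univ.filter (fun p => decide (IsSel u x p) = true)
      = Finset.univ.image (fun j => (Fjl u j)[x j]'(vertex_lt_Fjl hx j)) := by
    ext p
    simp only [Finset.mem_filter, Finset.mem_image, Finset.mem_univ, true_and,
      decide_eq_true_iff]
    constructor
    · intro hsel
      obtain ⟨ha, hg⟩ := occ_unique (hsel : _ = x (u p))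
      exact ⟨u p, hg⟩
    · rintro ⟨j, rfl⟩
      exact isSel_occ u x j _
  rw [himg, Finset.card_image_of_injective _ ?_, Finset.card_univ, Fintype.card_fin]
  intro j1 j2 h
  have h1 : u ((Fjl u j1)[x j1]'(vertex_lt_Fjl hx j1)) = j1 := mem_Fjl.mp (List.getElem_mem _)
  have h2 : u ((Fjl u j2)[x j2]'(vertex_lt_Fjl hx j2)) = j2 := mem_Fjl.mp (List.getElem_mem _)
  rw [← h1, ← h2]
  exact congrArg u h

lemma tauFun_eq {u : Fin n → Fin r} {x : Fin r → ℕ} (hlen : (Sli u x).length = r)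
    (j : Fin r) :
    tauFun u x j = u ((Sli u x)[(j : ℕ)]'(by rw [hlen]; exact j.isLt)) := by
  unfold tauFun
  rw [tauList_eq, List.getD_eq_getElem _ _ (by simpa [hlen] using j.isLt),
    List.getElem_map]

lemma tauFun_bijective {u : Fin n → Fin r} {x : Fin r → ℕ} (hx : IsVertex u x) :
    Function.Bijective (tauFun u x) := by
  have hlen := Sli_length hx
  rw [← Finite.injective_iff_bijective]
  intro j1 j2 h
  rw [tauFun_eq hlen, tauFun_eq hlen] at h
  have h1 : IsSel u x ((Sli u x)[(j1 : ℕ)]'(by rw [hlen]; exact j1.isLt)) :=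
    mem_Sli.mp (List.getElem_mem _)
  have h2 : IsSel u x ((Sli u x)[(j2 : ℕ)]'(by rw [hlen]; exact j2.isLt)) :=
    mem_Sli.mp (List.getElem_mem _)
  have := isSel_unique h1 h2 h
  rw [(Sli_nodup u x).getElem_inj_iff] at this
  exact Fin.ext this

lemma tauPerm_apply {u : Fin n → Fin r} {x : Fin r → ℕ} (hx : IsVertex u x) (j : Fin r) :
    tauPerm u x j = tauFun u x j := by
  rw [tauPerm, dif_pos (tauFun_bijective hx)]
  rfl


/-! ### The caesura layer -/

def Ql (u : Fin n → Fin r) : List (Fin n) :=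
  (List.finRange n).filter fun p => decide (∃ q, p < q ∧ u q = u p)

lemma caesura_eq (u : Fin n → Fin r) : caesura u = (Ql u).map u := rfl

lemma Ql_sorted (u : Fin n → Fin r) : (Ql u).Pairwise (· < ·) :=
  (List.pairwise_lt_finRange n).sublist List.filter_sublist

lemma Ql_nodup (u : Fin n → Fin r) : (Ql u).Nodup :=
  (List.nodup_finRange n).filter _

lemma mem_Ql {u : Fin n → Fin r} {p : Fin n} :
    p ∈ Ql u ↔ ∃ q, p < q ∧ u q = u p := by simp [Ql, List.mem_filter]

lemma cnt_split (u : Fin n → Fin r) (p : Fin n) :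
    cnt u (u p) = (Finset.univ.filter fun q => q < p ∧ u q = u p).card
      + ((Finset.univ.filter fun q => p < q ∧ u q = u p).card + 1) := by
  classical
  have h1 : (Finset.univ.filter fun q => u q = u p)
      = (Finset.univ.filter fun q => q < p ∧ u q = u p)
        ∪ ((Finset.univ.filter fun q => p < q ∧ u q = u p) ∪ {p}) := by
    ext q
    simp only [Finset.mem_filter, Finset.mem_union, Finset.mem_singleton, Finset.mem_univ,
      true_and]
    constructor
    · intro h
      rcases lt_trichotomy q p with h' | h' | h'
      · exact Or.inl ⟨h', h⟩
      · exact Or.inr (Or.inr h')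
      · exact Or.inr (Or.inl ⟨h', h⟩)
    · rintro (⟨_, h⟩ | ⟨_, h⟩ | rfl)
      · exact h
      · exact h
      · rfl
  have hd1 : Disjoint (Finset.univ.filter fun q => p < q ∧ u q = u p)
      ({p} : Finset (Fin n)) := by
    simp only [Finset.disjoint_singleton_right, Finset.mem_filter]
    intro ⟨_, h, _⟩
    exact lt_irrefl p h
  have hd2 : Disjoint (Finset.univ.filter fun q => q < p ∧ u q = u p)
      ((Finset.univ.filter fun q => p < q ∧ u q = u p) ∪ {p}) := by
    rw [Finset.disjoint_union_right]
    constructor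
    · rw [Finset.disjoint_left]
      intro q hq hq'
      simp only [Finset.mem_filter] at hq hq'
      exact absurd (hq.2.1.trans hq'.2.1) (lt_irrefl q)
    · simp only [Finset.disjoint_singleton_right, Finset.mem_filter]
      intro ⟨_, h, _⟩
      exact lt_irrefl p h
  rw [cnt, h1, Finset.card_union_of_disjoint hd2, Finset.card_union_of_disjoint hd1,
    Finset.card_singleton]

lemma not_exists_later_iff (u : Fin n → Fin r) (p : Fin n) :
    (¬ ∃ q, p < q ∧ u q = u p) ↔
      (Finset.univ.filter fun q => q < p ∧ u q = u p).card = cnt u (u p) - 1 := by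
  classical
  have hs := cnt_split u p
  have h0 : (¬ ∃ q, p < q ∧ u q = u p) ↔
      (Finset.univ.filter fun q => p < q ∧ u q = u p).card = 0 := by
    rw [Finset.card_eq_zero, Finset.filter_eq_empty_iff]
    simp
  rw [h0]
  omega

lemma cnt_pos {u : Fin n → Fin r} (hu : Function.Surjective u) (j : Fin r) :
    0 < cnt u j := by
  obtain ⟨p, rfl⟩ := hu j
  rw [cnt, Finset.card_pos]
  exact ⟨p, by simp⟩

/-- The position of the last occurrence of `j`. -/
def lastOcc (u : Fin n → Fin r) (j : Fin r) (h : 0 < cnt u j) : Fin n :=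
  (Fjl u j)[cnt u j - 1]'(by rw [Fjl_length]; omega)

lemma u_lastOcc (u : Fin n → Fin r) (j : Fin r) (h : 0 < cnt u j) :
    u (lastOcc u j h) = j := mem_Fjl.mp (List.getElem_mem _)

lemma below_lastOcc (u : Fin n → Fin r) (j : Fin r) (h : 0 < cnt u j) :
    (Finset.univ.filter fun q => q < lastOcc u j h ∧ u q = u (lastOcc u j h)).card
      = cnt u j - 1 :=
  occ_count u j _ _

lemma not_exists_later_iff' {u : Fin n → Fin r} (hu : Function.Surjective u) (p : Fin n) :
    (¬ ∃ q, p < q ∧ u q = u p) ↔ p = lastOcc u (u p) (cnt_pos hu (u p)) := by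
  rw [not_exists_later_iff]
  constructor
  · intro h
    obtain ⟨ha, hg⟩ := occ_unique h
    exact hg.symm
  · intro h
    rw [h]
    have := below_lastOcc u (u p) (cnt_pos hu (u p))
    rw [u_lastOcc u (u p) (cnt_pos hu (u p))] at this ⊢
    exact this

lemma Ql_length {u : Fin n → Fin r} (hu : Function.Surjective u) :
    (Ql u).length + r = n := by
  classical
  rw [Ql, length_filter_finRange]
  have hcompl : (Finset.univ.filter fun p : Fin n =>
      ¬ (decide (∃ q, p < q ∧ u q = u p) = true))
      = Finset.univ.image (fun j => lastOcc u j (cnt_pos hu j)) := by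
    ext p
    simp only [Finset.mem_filter, Finset.mem_image, Finset.mem_univ, true_and,
      decide_eq_true_iff]
    constructor
    · intro h
      exact ⟨u p, ((not_exists_later_iff' hu p).mp h).symm⟩
    · rintro ⟨j, rfl⟩
      rw [not_exists_later_iff' hu]
      congr 1
      exact (u_lastOcc u j _).symm
  have hinj : Function.Injective (fun j => lastOcc u j (cnt_pos hu j)) := by
    intro j1 j2 h
    have h1 := u_lastOcc u j1 (cnt_pos hu j1)
    have h2 := u_lastOcc u j2 (cnt_pos hu j2)
    rw [← h1, ← h2]
    exact congrArg u h
  have := Finset.card_filter_add_card_filter_not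
    (s := (Finset.univ : Finset (Fin n)))
    (p := fun p => decide (∃ q, p < q ∧ u q = u p) = true)
  rw [hcompl, Finset.card_image_of_injective _ hinj, Finset.card_univ, Fintype.card_fin,
    Finset.card_univ, Fintype.card_fin] at this
  exact this

lemma count_caesura {u : Fin n → Fin r} (hu : Function.Surjective u) (j : Fin r) :
    (caesura u).count j = cnt u j - 1 := by
  classical
  rw [caesura_eq, List.count_eq_countP, List.countP_map,
    List.countP_eq_length_filter, Ql, List.filter_filter, length_filter_finRange]
  have hset : (Finset.univ.filter fun p : Fin n =>
      (((fun x => x == j) ∘ u) p && decide (∃ q, p < q ∧ u q = u p)) = true)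
      = (Finset.univ.filter fun p => u p = j).erase (lastOcc u j (cnt_pos hu j)) := by
    ext p
    simp only [Finset.mem_filter, Finset.mem_erase, Finset.mem_univ, true_and,
      Bool.and_eq_true, decide_eq_true_iff, beq_iff_eq, Function.comp]
    constructor
    · rintro ⟨hj, hq⟩
      subst hj
      refine ⟨fun hp => ?_, rfl⟩
      exact (not_exists_later_iff' hu p).mpr hp hq
    · rintro ⟨hne, hj⟩
      subst hj
      refine ⟨rfl, ?_⟩
      by_contra h
      exact hne ((not_exists_later_iff' hu p).mp h)
  rw [hset, Finset.card_erase_of_mem (by simp [u_lastOcc]), ← cnt]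

/-! ### The fundamental chain -/

lemma caesura_length {r d : ℕ} {u : Fin (r + d) → Fin r} (hu : Function.Surjective u) :
    (caesura u).length = d := by
  rw [caesura_eq, List.length_map]
  have := Ql_length hu
  omega

lemma fundChain_apply {r d : ℕ} (u : Fin (r + d) → Fin r) (i : Fin (d + 1)) (j : Fin r) :
    fundChain u i j = ((caesura u).take (i : ℕ)).count j := rfl

lemma fundChain_step {r d : ℕ} (u : Fin (r + d) → Fin r) (i : Fin d)
    (hlen : (i : ℕ) < (caesura u).length) :
    fundChain u i.succ = Function.update (fundChain u i.castSucc) ((caesura u)[(i : ℕ)])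
      (fundChain u i.castSucc ((caesura u)[(i : ℕ)]) + 1) := by
  funext j
  rw [fundChain_apply, Function.update_apply, fundChain_apply, Fin.val_succ,
    Fin.coe_castSucc, List.take_succ, List.getElem?_eq_getElem hlen, List.count_append]
  by_cases hj : j = (caesura u)[(i : ℕ)]
  · rw [if_pos hj, hj]
    simp
  · rw [if_neg hj]
    simp [List.count_singleton', Ne.symm hj, fundChain_apply]

lemma fundChain_vertex {r d : ℕ} {u : Fin (r + d) → Fin r} (hu : Function.Surjective u)
    (i : Fin (d + 1)) : IsVertex u (fundChain u i) := by
  intro j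
  rw [fundChain_apply]
  have h1 : ((caesura u).take (i : ℕ)).count j ≤ (caesura u).count j :=
    (List.take_sublist _ _).count_le j
  have h2 := count_caesura hu j
  have h3 := cnt_pos hu j
  omega

lemma Sli_filter_lt_card (u : Fin n → Fin r) (x : Fin r → ℕ) (w : Fin n) :
    ((Sli u x).filter (fun s => decide (s < w))).length
      = (Finset.univ.filter fun s => IsSel u x s ∧ s < w).card := by
  rw [Sli, List.filter_filter, length_filter_finRange]
  apply congrArg Finset.card
  ext s
  simp [and_comm]

/-- The main nondegeneracy step for the fundamental chain. -/
lemma key_step {r d : ℕ} (u : Fin (r + d) → Fin r) (hu : Function.Surjective u)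
    (hnd : Nondeg u) (i : Fin d) :
    tauPerm u (fundChain u i.castSucc) ≠ tauPerm u (fundChain u i.succ) := by
  classical
  have hcl : (caesura u).length = d := caesura_length hu
  have hQl : (Ql u).length = d := by
    have := hcl; rwa [caesura_eq, List.length_map] at this
  set x : Fin r → ℕ := fundChain u i.castSucc with hxdef
  set x' : Fin r → ℕ := fundChain u i.succ with hx'def
  have hvx : IsVertex u x := fundChain_vertex hu _
  have hvx' : IsVertex u x' := fundChain_vertex hu _
  have hic : ((i.castSucc : Fin (d+1)) : ℕ) = (i : ℕ) := rfl
  have hip : (i : ℕ) < (Ql u).length := by rw [hQl]; exact i.isLt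
  have hicl : (i : ℕ) < (caesura u).length := by rw [hcl]; exact i.isLt
  set p : Fin (r + d) := (Ql u)[(i : ℕ)] with hpdef
  set k : Fin r := u p with hkdef
  have hck : (caesura u)[(i : ℕ)]'hicl = k := List.getElem_map u
  have hstep : x' = Function.update x k (x k + 1) := by
    rw [hxdef, hx'def, fundChain_step u i hicl, hck]
  have hx'k : x' k = x k + 1 := by rw [hstep, Function.update_self]
  have hx'ne : ∀ j, j ≠ k → x' j = x j := by
    intro j hj; rw [hstep, Function.update_of_ne hj]
  -- the key counting lemma
  have lemC : ∀ (j : Fin r) (w : Fin (r + d)), u w = j → p ≤ w →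
      (∀ s, s < w → u s = j → s < p) →
      (Finset.univ.filter fun s => s < w ∧ u s = j).card = x j := by
    intro j w hw hpw hbefore
    have hxj : x j = (((Ql u).take (i : ℕ)).filter (fun s => u s == j)).length := by
      rw [hxdef, fundChain_apply, hic, caesura_eq, ← List.map_take,
        List.count_eq_countP, List.countP_map, List.countP_eq_length_filter]
      rfl
    have hnd2 : (((Ql u).take (i : ℕ)).filter (fun s => u s == j)).Nodup :=
      (((Ql_nodup u).sublist (List.take_sublist _ _)).filter _)
    have hset : (Finset.univ.filter fun s => s < w ∧ u s = j)
        = (((Ql u).take (i : ℕ)).filter (fun s => u s == j)).toFinset := by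
      ext s
      simp only [Finset.mem_filter, Finset.mem_univ, true_and, List.mem_toFinset,
        List.mem_filter, beq_iff_eq]
      constructor
      · rintro ⟨hsw, hsj⟩
        have hsp : s < p := hbefore s hsw hsj
        have hsQ : s ∈ Ql u := mem_Ql.mpr ⟨w, hsw, by rw [hw, hsj]⟩
        rw [List.mem_iff_getElem] at hsQ
        obtain ⟨b, hb, rfl⟩ := hsQ
        have hbi : b < (i : ℕ) := by
          by_contra hbi
          push_neg at hbi
          have : (Ql u)[(i:ℕ)] ≤ (Ql u)[b] :=
            (Ql_sorted u).sortedLT.strictMono_get.monotone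
              (show (⟨(i:ℕ), hip⟩ : Fin (Ql u).length) ≤ ⟨b, hb⟩ by
                simp [Fin.le_def]; omega)
          exact absurd (lt_of_le_of_lt this hsp) (lt_irrefl _)
        refine ⟨?_, hsj⟩
        rw [List.mem_take_iff_getElem]
        exact ⟨b, by omega, rfl⟩
      · rintro ⟨hmem, hsj⟩
        rw [List.mem_take_iff_getElem] at hmem
        obtain ⟨b, hb, rfl⟩ := hmem
        refine ⟨?_, hsj⟩
        have hb2 : b < (Ql u).length := lt_of_lt_of_le hb (min_le_right _ _)
        have hlt : (Ql u)[b]'hb2 < p := (Ql_sorted u).sortedLT.strictMono_get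
          (show (⟨b, hb2⟩ : Fin (Ql u).length) < ⟨(i:ℕ), hip⟩ by
            simp only [Fin.lt_def]; exact lt_of_lt_of_le hb (min_le_left _ _))
        exact lt_of_lt_of_le hlt hpw
    rw [hset, List.toFinset_card_of_nodup hnd2, hxj]
  -- `p` is the selected position of `k` at `x`
  have hselp : IsSel u x p := lemC k p hkdef.symm le_rfl (fun s hs _ => hs)
  -- `p'`, the next occurrence of `k`, is the selected position of `k` at `x'`
  have hx'klen : x' k < (Fjl u k).length := vertex_lt_Fjl hvx' k
  set p' : Fin (r + d) := (Fjl u k)[x' k]'hx'klen with hp'def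
  have hup' : u p' = k := mem_Fjl.mp (List.getElem_mem _)
  have hselp' : IsSel u x' p' := isSel_occ u x' k hx'klen
  have hbp' : (Finset.univ.filter fun q => q < p' ∧ u q = u p').card = x' k := by
    have := occ_count u k (x' k) hx'klen
    exact this
  have hbp : (Finset.univ.filter fun q => q < p ∧ u q = u p).card = x k := hselp
  have hpp' : p < p' := by
    by_contra hle
    push_neg at hle
    have hsub : (Finset.univ.filter fun q => q < p' ∧ u q = u p')
        ⊆ (Finset.univ.filter fun q => q < p ∧ u q = u p) := by
      intro s hs
      simp only [Finset.mem_filter, Finset.mem_univ, true_and] at hs ⊢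
      exact ⟨lt_of_lt_of_le hs.1 hle, by rw [hs.2, hup', hkdef]⟩
    have hcard := Finset.card_le_card hsub
    rw [hbp', hbp, hx'k] at hcard
    omega
  have hvpp' : (p : ℕ) < (p' : ℕ) := hpp'
  have hq1 : (p : ℕ) + 1 < r + d := by
    have := p'.isLt
    omega
  set q : Fin (r + d) := ⟨(p : ℕ) + 1, hq1⟩ with hqdef
  have hqval : (q : ℕ) = (p : ℕ) + 1 := rfl
  have hm : u q ≠ k := by
    have h := hnd (p : ℕ) hq1
    have hpe : (⟨(p : ℕ), Nat.lt_of_succ_lt hq1⟩ : Fin (r + d)) = p := Fin.eta p _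
    rw [hpe] at h
    rw [hqdef, hkdef]
    exact h
  have hqne : q ≠ p' := fun h => hm (h ▸ hup')
  have hqp' : q < p' := by
    have h2 : (q : ℕ) ≠ (p' : ℕ) := Fin.val_ne_of_ne hqne
    rw [Fin.lt_def]
    omega
  have hpq : p < q := by rw [Fin.lt_def, hqval]; omega
  have hselq : IsSel u x q := by
    refine lemC (u q) q rfl (le_of_lt hpq) (fun s hs hus => ?_)
    have hsv : (s : ℕ) < (q : ℕ) := hs
    rw [Fin.lt_def]
    rcases Nat.lt_or_ge (s : ℕ) (p : ℕ) with h | h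
    · exact h
    · exfalso
      have : s = p := Fin.ext (by omega)
      rw [this] at hus
      exact hm (hus ▸ rfl : u q = u p) |>.elim
  have hselq' : IsSel u x' q := hselq.trans (hx'ne (u q) hm).symm
  have hlx : (Sli u x).length = r := Sli_length hvx
  have hlx' : (Sli u x').length = r := Sli_length hvx'
  have hqSx : q ∈ Sli u x := mem_Sli.mpr hselq
  have hqSx' : q ∈ Sli u x' := mem_Sli.mpr hselq'
  obtain ⟨ha, hga⟩ := mem_sorted_getElem (Sli_sorted u x) hqSx
  obtain ⟨ha', hga'⟩ := mem_sorted_getElem (Sli_sorted u x') hqSx'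
  -- the index of `q` drops by one from `x` to `x'`
  have haa' : ((Sli u x).filter (fun s => decide (s < q))).length
      = ((Sli u x').filter (fun s => decide (s < q))).length + 1 := by
    rw [Sli_filter_lt_card, Sli_filter_lt_card]
    have hA : (Finset.univ.filter fun s => IsSel u x s ∧ s < q)
        = insert p (Finset.univ.filter fun s => IsSel u x' s ∧ s < q) := by
      ext s
      simp only [Finset.mem_filter, Finset.mem_insert, Finset.mem_univ, true_and]
      constructor
      · rintro ⟨hsel, hlt⟩
        by_cases hsk : u s = k
        · left
          exact isSel_unique hsel hselp (by rw [hsk, hkdef])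
        · right
          exact ⟨hsel.trans (hx'ne (u s) hsk).symm, hlt⟩
      · rintro (rfl | ⟨hsel', hlt⟩)
        · exact ⟨hselp, hpq⟩
        · by_cases hsk : u s = k
          · exfalso
            have hsp' : s = p' := isSel_unique hsel' hselp' (by rw [hsk, hup'])
            rw [hsp'] at hlt
            exact lt_asymm hlt hqp'
          · exact ⟨hsel'.trans (hx'ne (u s) hsk), hlt⟩
    have hpnot : p ∉ (Finset.univ.filter fun s => IsSel u x' s ∧ s < q) := by
      simp only [Finset.mem_filter, Finset.mem_univ, true_and, not_and]
      intro hsel' _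
      have hcontr : x k = x' k := hselp.symm.trans hsel'
      omega
    rw [hA, Finset.card_insert_of_notMem hpnot]
  -- conclude
  intro hEq
  set A := ((Sli u x).filter (fun y => decide (y < q))).length with hAdef
  set A' := ((Sli u x').filter (fun y => decide (y < q))).length with hA'def
  have hjr : A' < r := by omega
  have hjlt : A' < (Sli u x).length := by omega
  have hjlt' : A' < (Sli u x').length := by omega
  have h1 : tauPerm u x ⟨A', hjr⟩ = u ((Sli u x)[A']'hjlt) := by
    rw [tauPerm_apply hvx, tauFun_eq hlx]
  have h2 : tauPerm u x' ⟨A', hjr⟩ = u ((Sli u x')[A']'hjlt') := by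
    rw [tauPerm_apply hvx', tauFun_eq hlx']
  have h2' : tauPerm u x' ⟨A', hjr⟩ = u q := h2.trans (congrArg u hga')
  have hslt : (Sli u x)[A']'hjlt < q := by
    conv_rhs => rw [← hga]
    exact (Sli_sorted u x).sortedLT.strictMono_get
      (show (⟨A', hjlt⟩ : Fin (Sli u x).length) < ⟨A, ha⟩ from by
        rw [Fin.mk_lt_mk]; omega)
  have hselstar : IsSel u x ((Sli u x)[A']'hjlt) := mem_Sli.mp (List.getElem_mem _)
  have hne2 : u ((Sli u x)[A']'hjlt) ≠ u q := by
    intro h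
    have := isSel_unique hselstar hselq h
    rw [this] at hslt
    exact lt_irrefl _ hslt
  apply hne2
  rw [← h1, hEq, h2']

end Stmt5Aux
theorem stmt5 (r d : ℕ) (hr : 1 ≤ r) (u : Fin (r + d) → Fin r)
    (hu : Function.Surjective u) (hnd : Nondeg u) :
    (caesura u).length = d ∧
    (∀ k : Fin r, (caesura u).count k = cnt u k - 1) ∧
    PrismMaxChain u (fundChain u) ∧
    ∀ i : Fin d, tauPerm u (fundChain u i.castSucc) ≠ tauPerm u (fundChain u i.succ) := by
  classical
  have hcl : (caesura u).length = d := Stmt5Aux.caesura_length hu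
  refine ⟨hcl, fun k => Stmt5Aux.count_caesura hu k, ⟨?_, ?_, ?_⟩,
    fun i => Stmt5Aux.key_step u hu hnd i⟩
  · intro k
    rw [Stmt5Aux.fundChain_apply]
    simp
  · intro k
    rw [Stmt5Aux.fundChain_apply]
    have hld : ((Fin.last d) : ℕ) = d := rfl
    rw [hld, List.take_of_length_le (le_of_eq hcl)]
    exact Stmt5Aux.count_caesura hu k
  · intro i
    exact ⟨(caesura u)[(i : ℕ)]'(by rw [hcl]; exact i.isLt),
      Stmt5Aux.fundChain_step u i (by rw [hcl]; exact i.isLt)⟩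
end

section
/- Let v be a surjection of degree d onto {1,…,r} which is degenerate, i.e., v(i) = v(i+1) for some 1 ≤ i ≤ r+d−1. Then every maximal chain (x^{(0)},…,x^{(d)}) of the prism of v contains two consecutive vertices with equal associated permutations: there exists 0 ≤ j ≤ d−1 with τ_v(x^{(j)}) = τ_v(x^{(j+1)}). Consequently, every d-simplex (τ_v(x^{(0)}),…,τ_v(x^{(d)})) of W(r) arising from a maximal chain of the prism of a degenerate surjection is a degenerate simplex. -/
lemma count_strictmono {n r : ℕ} (v : Fin n → Fin r) {m : Fin r} {p q : Fin n}
    (hpq : p < q) (hm : v p = m) :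
    (Finset.univ.filter fun a => a < p ∧ v a = m).card <
    (Finset.univ.filter fun a => a < q ∧ v a = m).card := by
  apply Finset.card_lt_card
  rw [Finset.ssubset_iff_of_subset]
  · exact ⟨p, by simp [hpq, hm], by simp⟩
  · intro a ha
    simp only [Finset.mem_filter, Finset.mem_univ, true_and] at *
    exact ⟨ha.1.trans hpq, ha.2⟩

lemma count_succ {n r : ℕ} (v : Fin n → Fin r) {m : Fin r} (ii jj : Fin n)
    (hij : (jj : ℕ) = (ii : ℕ) + 1) (hm : v ii = m) :
    (Finset.univ.filter fun a => a < jj ∧ v a = m).card =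
    (Finset.univ.filter fun a => a < ii ∧ v a = m).card + 1 := by
  have hins : (Finset.univ.filter fun a => a < jj ∧ v a = m)
      = insert ii (Finset.univ.filter fun a => a < ii ∧ v a = m) := by
    ext a
    simp only [Finset.mem_insert, Finset.mem_filter, Finset.mem_univ, true_and,
      Fin.lt_def]
    constructor
    · rintro ⟨h1, h2⟩
      by_cases hai : a = ii
      · exact Or.inl hai
      · have : (a : ℕ) ≠ (ii : ℕ) := fun h => hai (Fin.ext h)
        exact Or.inr ⟨by omega, h2⟩
    · rintro (rfl | ⟨h1, h2⟩)
      · exact ⟨by omega, hm⟩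
      · exact ⟨by omega, h2⟩
  rw [hins, Finset.card_insert_of_notMem (by simp)]

lemma tauList_step {n r : ℕ} (v : Fin n → Fin r) (x : Fin r → ℕ)
    (ii jj : Fin n) (hij : (jj : ℕ) = (ii : ℕ) + 1) (hv : v ii = v jj)
    (hx : x (v ii) = (Finset.univ.filter fun a => a < ii ∧ v a = v ii).card) :
    tauList v (Function.update x (v ii) (x (v ii) + 1)) = tauList v x := by
  classical
  have key : ∀ p : Fin n,
      IsSel v (Function.update x (v ii) (x (v ii) + 1)) p ↔
      IsSel v x (Equiv.swap ii jj p) := by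
    intro p
    by_cases hpi : p = ii
    · subst hpi
      rw [Equiv.swap_apply_left]
      unfold IsSel
      rw [Function.update_self, ← hv,
        count_succ v p jj hij (rfl : v p = v p)]
      rw [hx]
      omega
    · by_cases hpj : p = jj
      · subst hpj
        rw [Equiv.swap_apply_right]
        unfold IsSel
        rw [show v p = v ii from hv.symm, Function.update_self,
          count_succ v ii p hij (rfl : v ii = v ii)]
        rw [hx]
        omega
      · rw [Equiv.swap_apply_of_ne_of_ne hpi hpj]
        unfold IsSel
        by_cases hvp : v p = v ii
        · rw [hvp, Function.update_self]
          have hval : (p : ℕ) < (ii : ℕ) ∨ (jj : ℕ) < (p : ℕ) := by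
            have h1 : (p : ℕ) ≠ (ii : ℕ) := fun h => hpi (Fin.ext h)
            have h2 : (p : ℕ) ≠ (jj : ℕ) := fun h => hpj (Fin.ext h)
            omega
          rcases hval with hlt | hgt
          · have h1 := count_strictmono v (show p < ii from hlt) hvp
            rw [hx]
            omega
          · have h1 := count_strictmono v (show jj < p from hgt)
              (show v jj = v ii from hv.symm)
            rw [count_succ v ii jj hij (rfl : v ii = v ii)] at h1
            rw [hx]
            omega
        · rw [Function.update_of_ne hvp]
  -- lists
  have hmemL : ∀ p : Fin n,
      (p ∈ (List.finRange n).filter fun q => decide (IsSel v x q)) ↔ IsSel v x p := by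
    intro p; simp [List.mem_filter]
  have hmemL' : ∀ p : Fin n,
      (p ∈ (List.finRange n).filter fun q =>
        decide (IsSel v (Function.update x (v ii) (x (v ii) + 1)) q)) ↔
      IsSel v (Function.update x (v ii) (x (v ii) + 1)) p := by
    intro p; simp [List.mem_filter]
  set L := (List.finRange n).filter (fun q => decide (IsSel v x q)) with hL
  set L' := (List.finRange n).filter
    (fun q => decide (IsSel v (Function.update x (v ii) (x (v ii) + 1)) q)) with hL'
  have hLsort : L.Pairwise (· < ·) := (List.pairwise_lt_finRange n).filter _
  have hL'sort : L'.Pairwise (· < ·) := (List.pairwise_lt_finRange n).filter _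
  have hjjL : jj ∉ L := by
    rw [hmemL]
    intro hsel
    unfold IsSel at hsel
    rw [← hv, count_succ v ii jj hij (rfl : v ii = v ii), hx] at hsel
    omega
  have hσval : ∀ a : Fin n, a ≠ jj → Equiv.swap ii jj a = if a = ii then jj else a := by
    intro a haj
    by_cases hai : a = ii
    · subst hai; simp [Equiv.swap_apply_left]
    · simp [hai, Equiv.swap_apply_of_ne_of_ne hai haj]
  have hmono : ∀ a ∈ L, ∀ b ∈ L, a < b → Equiv.swap ii jj a < Equiv.swap ii jj b := by
    intro a ha b hb hab
    have haj : a ≠ jj := fun h => hjjL (h ▸ ha)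
    have hbj : b ≠ jj := fun h => hjjL (h ▸ hb)
    rw [hσval a haj, hσval b hbj]
    have habv : (a : ℕ) < (b : ℕ) := hab
    have hbjv : (b : ℕ) ≠ (jj : ℕ) := fun h => hbj (Fin.ext h)
    by_cases hai : a = ii
    · have hbi : b ≠ ii := fun h => by
        have : (a : ℕ) = (b : ℕ) := by rw [hai, h]
        omega
      simp only [if_pos hai, if_neg hbi]
      have hiv : (a : ℕ) = (ii : ℕ) := by rw [hai]
      exact show (jj : ℕ) < (b : ℕ) by omega
    · by_cases hbi : b = ii
      · simp only [if_neg hai, if_pos hbi]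
        have hiv : (b : ℕ) = (ii : ℕ) := by rw [hbi]
        exact show (a : ℕ) < (jj : ℕ) by omega
      · simp only [if_neg hai, if_neg hbi]; exact hab
  have hmapsort : (L.map (Equiv.swap ii jj)).Pairwise (· < ·) := by
    rw [List.pairwise_map]
    exact List.Pairwise.imp_of_mem (fun {a b} ha hb h => hmono a ha b hb h) hLsort
  have hnodupL' : L'.Nodup := hL'sort.imp ne_of_lt
  have hnodupmap : (L.map (Equiv.swap ii jj)).Nodup := hmapsort.imp ne_of_lt
  have hmemmap : ∀ p : Fin n, p ∈ L.map (Equiv.swap ii jj) ↔ Equiv.swap ii jj p ∈ L := by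
    intro p
    rw [List.mem_map]
    constructor
    · rintro ⟨a, ha, rfl⟩
      rwa [Equiv.swap_apply_self]
    · intro h
      exact ⟨Equiv.swap ii jj p, h, Equiv.swap_apply_self _ _ _⟩
  have heq : L' = L.map (Equiv.swap ii jj) := by
    haveI : IsAntisymm (Fin n) (· < ·) := ⟨fun a b h1 h2 => absurd h2 (lt_asymm h1)⟩
    apply List.Perm.eq_of_pairwise (fun a b _ _ h1 h2 => absurd h2 (lt_asymm h1)) hL'sort hmapsort
    rw [List.perm_ext_iff_of_nodup hnodupL' hnodupmap]
    intro p
    rw [hmemL', hmemmap, hmemL, key]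
  have hvσ : v ∘ (Equiv.swap ii jj) = v := by
    funext a
    by_cases hai : a = ii
    · subst hai
      simp only [Function.comp_apply, Equiv.swap_apply_left]
      exact hv.symm
    · by_cases haj : a = jj
      · subst haj
        simp only [Function.comp_apply, Equiv.swap_apply_right]
        exact hv
      · simp [Equiv.swap_apply_of_ne_of_ne hai haj]
  show L'.map v = L.map v
  rw [heq, List.map_map, hvσ]


theorem stmt6 (r d : ℕ) (hr : 1 ≤ r) (v : Fin (r + d) → Fin r)
    (hv : Function.Surjective v)
    (hdeg : ∃ i : ℕ, ∃ h : i + 1 < r + d, v ⟨i, Nat.lt_of_succ_lt h⟩ = v ⟨i + 1, h⟩) :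
    ∀ x : Fin (d + 1) → Fin r → ℕ, PrismMaxChain v x →
      ∃ j : Fin d, tauPerm v (x j.castSucc) = tauPerm v (x j.succ) := by
  classical
  intro x hx
  obtain ⟨i, h, hvi⟩ := hdeg
  obtain ⟨h0, hlast, hstep⟩ := hx
  set ii : Fin (r + d) := ⟨i, Nat.lt_of_succ_lt h⟩ with hii
  set jj : Fin (r + d) := ⟨i + 1, h⟩ with hjj
  have hij : (jj : ℕ) = (ii : ℕ) + 1 := rfl
  set c := (Finset.univ.filter fun a => a < ii ∧ v a = v ii).card with hc
  -- cnt bound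
  have hcnt : c + 2 ≤ cnt v (v ii) := by
    have hsub : insert jj (Finset.univ.filter fun a => a < jj ∧ v a = v ii)
        ⊆ Finset.univ.filter fun a => v a = v ii := by
      intro a ha
      simp only [Finset.mem_insert, Finset.mem_filter, Finset.mem_univ, true_and] at *
      rcases ha with rfl | ⟨_, h2⟩
      · exact hvi.symm
      · exact h2
    have hcard := Finset.card_le_card hsub
    rw [Finset.card_insert_of_notMem (by simp)] at hcard
    rw [count_succ v ii jj hij rfl] at hcard
    unfold cnt
    omega
  -- find the step where the (v ii)-coordinate passes c
  have hexists : ∃ j : Fin d, x j.castSucc (v ii) ≤ c ∧ c < x j.succ (v ii) := by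
    by_contra hcon
    push_neg at hcon
    have hall : ∀ t, ∀ ht : t < d + 1, x ⟨t, ht⟩ (v ii) ≤ c := by
      intro t
      induction t with
      | zero =>
        intro ht
        rw [show (⟨0, ht⟩ : Fin (d + 1)) = 0 from rfl, h0]
        omega
      | succ s ihs =>
        intro ht
        have hs : s < d + 1 := by omega
        have hsd : s < d := by omega
        have h1 := hcon ⟨s, hsd⟩ (ihs hs)
        exact h1
    have h2 := hall d (by omega)
    have h3 : x (Fin.last d) (v ii) = cnt v (v ii) - 1 := hlast (v ii)
    have h4 : (Fin.last d) = ⟨d, by omega⟩ := rfl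
    rw [h4] at h3
    omega
  obtain ⟨j, hj1, hj2⟩ := hexists
  obtain ⟨k', hk'⟩ := hstep j
  have hkk : k' = v ii := by
    by_contra hne
    rw [hk', Function.update_of_ne (fun hh => hne hh.symm)] at hj2
    omega
  subst hkk
  have hval : x j.castSucc (v ii) = c := by
    rw [hk', Function.update_self] at hj2
    omega
  refine ⟨j, ?_⟩
  have hLeq : tauList v (x j.succ) = tauList v (x j.castSucc) := by
    rw [hk']
    exact tauList_step v (x j.castSucc) ii jj hij hvi (hval.trans hc)
  have hfun : tauFun v (x j.castSucc) = tauFun v (x j.succ) := by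
    funext a
    unfold tauFun
    rw [hLeq]
  unfold tauPerm
  rw [hfun]
end

section
/- For every r ≥ 1 and every d ≥ 2, the composite ∂∘∂ : X(r;𝔽_2)_d → X(r;𝔽_2)_{d−2} is zero; hence (X(r;𝔽_2)_*, ∂) is a chain complex over 𝔽_2. -/
/-! Deleting two entries of a sequence in either order gives the same sequence, so over `𝔽₂`
the terms of `∂∂[u]` cancel in pairs. For this to apply, `∂[v] = Σ_p [v ∘ δ_p]` must hold for
every sequence `v`, not only for basis elements: if `v` is not surjective, neither is any
deletion of it, and if `v j = v (j + 1)`, then the only deletions of `v` that can be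
nondegenerate are those at `j` and `j + 1`, which are equal. -/

theorem Fin.val_succAbove {n : ℕ} (p : Fin (n + 1)) (i : Fin n) :
    (p.succAbove i : ℕ) = if (i : ℕ) < p then (i : ℕ) else (i : ℕ) + 1 := by
  unfold Fin.succAbove
  split_ifs <;> simp_all [Fin.lt_def]

/-- The pairing is the fixed-point-free involution `(i, j) ↦ (i.succAbove j, j.predAbove i)`,
which preserves `i.succAbove ∘ j.succAbove`. -/
theorem sum_sum_succAbove_comp_succAbove_eq_zero {M : Type*} [AddCommGroup M]
    [Module (ZMod 2) M] {n : ℕ} (f : (Fin n → Fin (n + 2)) → M) :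
    ∑ i : Fin (n + 2), ∑ j : Fin (n + 1), f (i.succAbove ∘ j.succAbove) = 0 := by
  rw [← Finset.sum_product']
  refine Finset.sum_involution (fun ij _ => (ij.1.succAbove ij.2, ij.2.predAbove ij.1))
    (fun ij _ => ?_) (fun ij _ _ h => Fin.succAbove_ne ij.1 ij.2 (congrArg Prod.fst h))
    (fun _ _ => Finset.mem_univ _) (fun ij _ => ?_)
  · have hcomp : (ij.1.succAbove ij.2).succAbove ∘ (ij.2.predAbove ij.1).succAbove =
        ij.1.succAbove ∘ ij.2.succAbove :=
      funext (Fin.succAbove_succAbove_succAbove_predAbove ij.1 ij.2)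
    rw [hcomp]
    exact ZModModule.add_self _
  · exact Prod.ext (Fin.succAbove_succAbove_predAbove ij.1 ij.2)
      (Fin.predAbove_predAbove_succAbove ij.1 ij.2)

theorem comp_succAbove_castSucc_eq_comp_succAbove_succ {α : Type*} {n : ℕ}
    {u : Fin (n + 1) → α} {j : Fin n} (hu : u j.succ = u j.castSucc) :
    u ∘ j.castSucc.succAbove = u ∘ j.succ.succAbove := by
  funext i
  rcases lt_trichotomy i j with hij | rfl | hji
  · simp [Fin.succAbove_castSucc_of_lt _ _ hij, Fin.succAbove_succ_of_le _ _ hij.le]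
  · simp [hu]
  · simp [Fin.succAbove_castSucc_of_le _ _ hji.le, Fin.succAbove_succ_of_lt _ _ hji]

theorem not_nondeg_comp_succAbove {n r : ℕ} {u : Fin (n + 1) → Fin r} {j : Fin n}
    (hu : u j.succ = u j.castSucc) {p : Fin (n + 1)} (hpj : p ≠ j.castSucc)
    (hpj' : p ≠ j.succ) : ¬ Nondeg (u ∘ p.succAbove) := by
  have hpj : (p : ℕ) ≠ j := fun h => hpj (Fin.ext h)
  have hpj' : (p : ℕ) ≠ j + 1 := fun h => hpj' (Fin.ext h)
  have hk : (if (j : ℕ) < p then (j : ℕ) else j - 1) + 1 < n := by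
    have := p.isLt; have := j.isLt; split_ifs <;> omega
  intro hnd
  apply hnd _ hk
  simp only [Function.comp_apply]
  convert hu using 2 <;> ext <;> simp only [Fin.val_succAbove, Fin.val_succ, Fin.val_castSucc] <;>
    split_ifs <;> omega

theorem xbr_of_not_surjective {r e : ℕ} {v : Fin (r + e) → Fin r}
    (hv : ¬ Function.Surjective v) : xbr r e v = 0 :=
  dif_neg fun h => hv h.1

theorem xbr_of_not_nondeg {r e : ℕ} {v : Fin (r + e) → Fin r} (hv : ¬ Nondeg v) :
    xbr r e v = 0 :=
  dif_neg fun h => hv h.2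

theorem sum_xbr_comp_succAbove_of_not_surjective {r d : ℕ} {u : Fin (r + d + 1) → Fin r}
    (hu : ¬ Function.Surjective u) : ∑ p : Fin (r + d + 1), xbr r d (u ∘ p.succAbove) = 0 :=
  Finset.sum_eq_zero fun _ _ => xbr_of_not_surjective fun h => hu h.of_comp

theorem sum_xbr_comp_succAbove_of_not_nondeg {r d : ℕ} {u : Fin (r + d + 1) → Fin r}
    (hu : ¬ Nondeg u) : ∑ p : Fin (r + d + 1), xbr r d (u ∘ p.succAbove) = 0 := by
  simp only [Nondeg, not_forall, not_not] at hu
  obtain ⟨j, hj, hrep⟩ := hu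
  set J : Fin (r + d) := ⟨j, by omega⟩
  have hrep : u J.succ = u J.castSucc := hrep
  have hrest : ∀ p ∈ Finset.univ, p ∉ ({J.castSucc, J.succ} : Finset _) →
      xbr r d (u ∘ p.succAbove) = 0 := by
    intro p _ hp
    simp only [Finset.mem_insert, Finset.mem_singleton, not_or] at hp
    exact xbr_of_not_nondeg (not_nondeg_comp_succAbove hrep hp.1 hp.2)
  rw [← Finset.sum_subset (Finset.subset_univ _) hrest,
    Finset.sum_pair (Fin.castSucc_lt_succ (i := J)).ne,
    comp_succAbove_castSucc_eq_comp_succAbove_succ hrep]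
  exact ZModModule.add_self _

theorem xbnd_single {r d : ℕ} (u : XBasis r (d + 1)) :
    xbnd r d (Finsupp.single u 1) = ∑ p : Fin (r + d + 1), xbr r d (u.1 ∘ p.succAbove) := by
  rw [xbnd, Finsupp.lsum_single, LinearMap.toSpanSingleton_apply, one_smul]
  rfl

theorem xbnd_xbr {r d : ℕ} (v : Fin (r + (d + 1)) → Fin r) :
    xbnd r d (xbr r (d + 1) v) = ∑ p : Fin (r + d + 1), xbr r d (v ∘ p.succAbove) := by
  by_cases hv : Function.Surjective v ∧ Nondeg v
  · rw [xbr, dif_pos hv, xbnd_single]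
  · rw [xbr, dif_neg hv, map_zero, eq_comm]
    by_cases hs : Function.Surjective v
    · exact sum_xbr_comp_succAbove_of_not_nondeg fun hn => hv ⟨hs, hn⟩
    · exact sum_xbr_comp_succAbove_of_not_surjective hs

theorem stmt7_general (r : ℕ) (d : ℕ) :
    (xbnd r d).comp (xbnd r (d + 1)) = 0 := by
  refine Finsupp.lhom_ext' fun u => LinearMap.ext_ring ?_
  show xbnd r d (xbnd r (d + 1) (Finsupp.single u 1)) = 0
  rw [xbnd_single, map_sum]
  simp only [xbnd_xbr, Function.comp_assoc]
  exact sum_sum_succAbove_comp_succAbove_eq_zero fun φ => xbr r d (u.1 ∘ φ)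

theorem stmt7 (r : ℕ) (hr : 1 ≤ r) (d : ℕ) :
    (xbnd r d).comp (xbnd r (d + 1)) = 0 :=
  stmt7_general r d
end

section
/- Let w be a permutation of {1,…,r} and let u be a nondegenerate surjection of degree d onto {1,…,r}. Then w∘u (the function i ↦ w(u(i))) is a nondegenerate surjection of degree d onto {1,…,r}, and TC[w∘u] = w·TC[u] in C_d(r;𝔽_2), where the action of w on C_d(r;𝔽_2) is given on basis elements by w·[w_0,…,w_d] = [w∘w_0,…,w∘w_d]. In other words, TC is equivariant for the action of the symmetric group Σ_r. -/
/-! ## Auxiliary lemmas -/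

section AuxRank

lemma rank_mono {n : ℕ} (S : Finset (Fin n)) {p p' : Fin n} (hp : p ∈ S) (hlt : p < p') :
    (S.filter fun q => q < p).card < (S.filter fun q => q < p').card := by
  apply Finset.card_lt_card
  constructor
  · intro q hq
    simp only [Finset.mem_filter] at *
    exact ⟨hq.1, hq.2.trans hlt⟩
  · intro hsub
    have := hsub (Finset.mem_filter.mpr ⟨hp, hlt⟩)
    exact absurd (Finset.mem_filter.mp this).2 (lt_irrefl p)

lemma rank_injOn {n : ℕ} (S : Finset (Fin n)) {p p' : Fin n} (hp : p ∈ S) (hp' : p' ∈ S)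
    (h : (S.filter fun q => q < p).card = (S.filter fun q => q < p').card) : p = p' := by
  rcases lt_trichotomy p p' with h1 | h1 | h1
  · exact absurd h (Nat.ne_of_lt (rank_mono S hp h1))
  · exact h1
  · exact absurd h.symm (Nat.ne_of_lt (rank_mono S hp' h1))

lemma rank_existsUnique {n : ℕ} (S : Finset (Fin n)) {m : ℕ} (hm : m < S.card) :
    ∃! p, p ∈ S ∧ (S.filter fun q => q < p).card = m := by
  have hmem : ∀ p ∈ S, (S.filter fun q => q < p).card ∈ Finset.range S.card := by
    intro p hp
    rw [Finset.mem_range]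
    apply Finset.card_lt_card
    constructor
    · exact Finset.filter_subset _ _
    · intro hsub
      have := hsub hp
      exact absurd (Finset.mem_filter.mp this).2 (lt_irrefl p)
  obtain ⟨p, hp, hpm⟩ := Finset.surj_on_of_inj_on_of_card_le
    (fun p _ => (S.filter fun q => q < p).card) hmem
    (fun a₁ a₂ h₁ h₂ h => rank_injOn S h₁ h₂ h) (by simp) m (Finset.mem_range.mpr hm)
  exact ⟨p, ⟨hp, hpm.symm⟩, fun p' ⟨hp', hpm'⟩ => rank_injOn S hp' hp (hpm'.trans hpm)⟩

end AuxRank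

section AuxTau

variable {n r : ℕ}

lemma isSel_existsUnique {u : Fin n → Fin r} {x : Fin r → ℕ} (hx : IsVertex u x)
    (k : Fin r) : ∃! p : Fin n, u p = k ∧ IsSel u x p := by
  obtain ⟨p, ⟨hpS, hpr⟩, huniq⟩ := rank_existsUnique (Finset.univ.filter fun i => u i = k) (hx k)
  have hS : ∀ q : Fin n, u q = k →
      ((Finset.univ.filter fun i => u i = k).filter fun i => i < q) =
        Finset.univ.filter fun i => i < q ∧ u i = u q := by
    intro q hq
    rw [Finset.filter_filter]
    apply Finset.filter_congr
    intro i _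
    simp [hq, and_comm]
  have hup : u p = k := (Finset.mem_filter.mp hpS).2
  refine ⟨p, ⟨hup, ?_⟩, ?_⟩
  · unfold IsSel
    rw [← hS p hup, hpr, hup]
  · rintro p' ⟨hup', hsel'⟩
    apply huniq
    refine ⟨Finset.mem_filter.mpr ⟨Finset.mem_univ _, hup'⟩, ?_⟩
    rw [hS p' hup']
    unfold IsSel at hsel'
    rw [hsel', hup']

lemma mem_tauList {u : Fin n → Fin r} {x : Fin r → ℕ} (hx : IsVertex u x)
    (k : Fin r) : k ∈ tauList u x := by
  obtain ⟨p, ⟨hup, hsel⟩, _⟩ := isSel_existsUnique hx k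
  unfold tauList
  refine List.mem_map.mpr ⟨p, List.mem_filter.mpr ⟨List.mem_finRange p, by simpa using hsel⟩, hup⟩

lemma tauList_nodup {u : Fin n → Fin r} {x : Fin r → ℕ} (hx : IsVertex u x) :
    (tauList u x).Nodup := by
  unfold tauList
  apply List.Nodup.map_on
  · intro p hp p' hp' hupp
    have hselp : IsSel u x p := by simpa using (List.mem_filter.mp hp).2
    have hselp' : IsSel u x p' := by simpa using (List.mem_filter.mp hp').2
    obtain ⟨q, -, huniq⟩ := isSel_existsUnique hx (u p)
    exact (huniq p ⟨rfl, hselp⟩).trans (huniq p' ⟨hupp.symm, hselp'⟩).symm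
  · exact (List.nodup_finRange n).filter _

lemma tauList_length {u : Fin n → Fin r} {x : Fin r → ℕ} (hx : IsVertex u x) :
    (tauList u x).length = r := by
  have h1 : (tauList u x).length ≤ r := by
    simpa using (tauList_nodup hx).length_le_card
  have h2 : r ≤ (tauList u x).length := by
    have hsub : (Finset.univ : Finset (Fin r)) ⊆ (tauList u x).toFinset := by
      intro k _
      exact List.mem_toFinset.mpr (mem_tauList hx k)
    calc r = (Finset.univ : Finset (Fin r)).card := by simp
      _ ≤ (tauList u x).toFinset.card := Finset.card_le_card hsub
      _ ≤ (tauList u x).length := (tauList u x).toFinset_card_le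
  omega

lemma tauFun_surjective {u : Fin n → Fin r} {x : Fin r → ℕ} (hx : IsVertex u x) :
    Function.Surjective (tauFun u x) := by
  intro k
  obtain ⟨⟨j, hj⟩, hget⟩ := List.mem_iff_get.mp (mem_tauList hx k)
  refine ⟨⟨j, (tauList_length hx) ▸ hj⟩, ?_⟩
  unfold tauFun
  rw [List.getD_eq_getElem _ _ hj]
  simpa [List.get_eq_getElem] using hget

lemma tauFun_bijective {u : Fin n → Fin r} {x : Fin r → ℕ} (hx : IsVertex u x) :
    Function.Bijective (tauFun u x) :=
  (Fintype.bijective_iff_surjective_and_card _).mpr ⟨tauFun_surjective hx, rfl⟩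

lemma tauPerm_apply {u : Fin n → Fin r} {x : Fin r → ℕ} (hx : IsVertex u x) (j : Fin r) :
    tauPerm u x j = tauFun u x j := by
  unfold tauPerm
  rw [dif_pos (tauFun_bijective hx)]
  rfl

end AuxTau

section AuxComp

variable {n r : ℕ} (w : Equiv.Perm (Fin r))

lemma cnt_comp (u : Fin n → Fin r) (k : Fin r) :
    cnt (fun i => w (u i)) k = cnt u (w⁻¹ k) := by
  unfold cnt
  congr 1
  apply Finset.filter_congr
  intro i _
  simp [Equiv.apply_eq_iff_eq_symm_apply, Equiv.Perm.inv_def]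

lemma isVertex_comp {u : Fin n → Fin r} {x : Fin r → ℕ} :
    IsVertex (fun i => w (u i)) x ↔ IsVertex u (fun k => x (w k)) := by
  constructor
  · intro h k
    have := h (w k)
    rw [cnt_comp] at this
    simpa using this
  · intro h k
    rw [cnt_comp]
    simpa using h (w⁻¹ k)

lemma isSel_comp {u : Fin n → Fin r} {x : Fin r → ℕ} (p : Fin n) :
    IsSel (fun i => w (u i)) x p ↔ IsSel u (fun k => x (w k)) p := by
  unfold IsSel
  simp [EmbeddingLike.apply_eq_iff_eq]

lemma tauList_comp (u : Fin n → Fin r) (x : Fin r → ℕ) :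
    tauList (fun i => w (u i)) x = (tauList u (fun k => x (w k))).map w := by
  unfold tauList
  rw [List.map_map]
  congr 1
  apply List.filter_congr
  intro p _
  simp only [decide_eq_decide]
  exact isSel_comp w p

lemma tauFun_comp {u : Fin n → Fin r} {x : Fin r → ℕ}
    (hx : IsVertex u fun k => x (w k)) (j : Fin r) :
    tauFun (fun i => w (u i)) x j = w (tauFun u (fun k => x (w k)) j) := by
  unfold tauFun
  rw [tauList_comp]
  have hlen : (tauList u fun k => x (w k)).length = r := tauList_length hx
  have hj : (j : ℕ) < (tauList u fun k => x (w k)).length := by rw [hlen]; exact j.isLt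
  rw [List.getD_eq_getElem _ _ (by simpa using hj), List.getD_eq_getElem _ _ hj,
    List.getElem_map]

lemma tauPerm_comp {u : Fin n → Fin r} {x : Fin r → ℕ}
    (hx : IsVertex u fun k => x (w k)) :
    tauPerm (fun i => w (u i)) x = w * tauPerm u (fun k => x (w k)) := by
  have hb : Function.Bijective (tauFun (fun i => w (u i)) x) := by
    have : tauFun (fun i => w (u i)) x = fun j => w (tauFun u (fun k => x (w k)) j) :=
      funext (tauFun_comp w hx)
    rw [this]
    exact w.bijective.comp (tauFun_bijective hx)
  apply Equiv.ext
  intro j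
  rw [tauPerm_apply ((isVertex_comp w).mpr hx) j, tauFun_comp w hx j]
  simp only [Equiv.Perm.mul_apply]
  rw [tauPerm_apply hx j]

end AuxComp

section AuxChain

variable {r d : ℕ}

lemma cnt_pos {u : Fin (r + d) → Fin r} (hu : Function.Surjective u) (k : Fin r) :
    0 < cnt u k := by
  obtain ⟨i, hi⟩ := hu k
  exact Finset.card_pos.mpr ⟨i, Finset.mem_filter.mpr ⟨Finset.mem_univ _, hi⟩⟩

lemma chain_step {u : Fin (r + d) → Fin r} {x : Fin (d + 1) → Fin r → ℕ}
    (hx : PrismMaxChain u x) (i : Fin d) (k : Fin r) :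
    x i.castSucc k ≤ x i.succ k := by
  obtain ⟨k₀, hk₀⟩ := hx.2.2 i
  rw [hk₀, Function.update_apply]
  by_cases h : k = k₀ <;> simp [h]

lemma chain_le_last {u : Fin (r + d) → Fin r} {x : Fin (d + 1) → Fin r → ℕ}
    (hx : PrismMaxChain u x) (k : Fin r) :
    ∀ t m (h : m + t = d), x ⟨m, by omega⟩ k ≤ x (Fin.last d) k := by
  intro t
  induction t with
  | zero =>
    intro m h
    have : (⟨m, by omega⟩ : Fin (d + 1)) = Fin.last d := by
      ext; simp [Fin.last]; omega
    rw [this]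
  | succ t ih =>
    intro m h
    have h1 : x ⟨m, by omega⟩ k ≤ x ⟨m + 1, by omega⟩ k := by
      have := chain_step hx ⟨m, by omega⟩ k
      simpa [Fin.castSucc, Fin.succ, Fin.castAdd, Fin.castLE] using this
    exact le_trans h1 (ih (m + 1) (by omega))

lemma chain_isVertex {u : Fin (r + d) → Fin r} (hu : Function.Surjective u)
    {x : Fin (d + 1) → Fin r → ℕ} (hx : PrismMaxChain u x) (i : Fin (d + 1)) :
    IsVertex u (x i) := by
  intro k
  have h1 : x i k ≤ x (Fin.last d) k := by
    have := chain_le_last hx k (d - (i : ℕ)) (i : ℕ) (by omega)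
    simpa [Fin.eta] using this
  rw [hx.2.1 k] at h1
  have := cnt_pos hu k
  omega

lemma maxChains_map (w : Equiv.Perm (Fin r)) (u : Fin (r + d) → Fin r)
    {x : Fin (d + 1) → Fin r → ℕ} (hx : x ∈ maxChains u) :
    (fun i k => x i (w⁻¹ k)) ∈ maxChains (fun i => w (u i)) := by
  classical
  rw [maxChains, Finset.mem_filter, Finset.mem_image] at hx ⊢
  obtain ⟨⟨y, -, hy⟩, hch⟩ := hx
  constructor
  · refine ⟨fun i k => y i (w⁻¹ k), Finset.mem_univ _, ?_⟩
    funext i k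
    rw [← hy]
  · refine ⟨?_, ?_, ?_⟩
    · intro k
      exact hch.1 (w⁻¹ k)
    · intro k
      show x (Fin.last d) (w⁻¹ k) = _
      rw [hch.2.1 (w⁻¹ k), cnt_comp]
    · intro i
      obtain ⟨k₀, hk₀⟩ := hch.2.2 i
      refine ⟨w k₀, ?_⟩
      funext k
      show x i.succ (w⁻¹ k) = Function.update (fun k => x i.castSucc (w⁻¹ k)) (w k₀)
        (x i.castSucc (w⁻¹ (w k₀)) + 1) k
      rw [hk₀]
      simp only [Function.update_apply, Equiv.Perm.inv_def, Equiv.symm_apply_apply]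
      by_cases h : k = w k₀
      · have h' : w⁻¹ k = k₀ := by rw [h, Equiv.Perm.inv_def, Equiv.symm_apply_apply]
        rw [Equiv.Perm.inv_def] at h'
        simp [h, h']
      · have h' : w⁻¹ k ≠ k₀ := fun e => h (by rw [← e, Equiv.Perm.inv_def, Equiv.apply_symm_apply])
        rw [Equiv.Perm.inv_def] at h'
        simp [h, h']

end AuxChain

section AuxPermAct

variable {r d : ℕ}

lemma cbr_pos (f : Fin (d + 1) → Equiv.Perm (Fin r))
    (h : ∀ i : Fin d, f i.castSucc ≠ f i.succ) :
    cbr r d f = Finsupp.single ⟨f, h⟩ 1 := dif_pos h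

lemma cbr_neg (f : Fin (d + 1) → Equiv.Perm (Fin r))
    (h : ¬ ∀ i : Fin d, f i.castSucc ≠ f i.succ) :
    cbr r d f = 0 := dif_neg h

lemma permAct_cbr (w : Equiv.Perm (Fin r)) (f : Fin (d + 1) → Equiv.Perm (Fin r)) :
    permAct r d w (cbr r d f) = cbr r d fun i => w * f i := by
  classical
  by_cases h : ∀ i : Fin d, f i.castSucc ≠ f i.succ
  · have h' : ∀ i : Fin d, (fun i => w * f i) i.castSucc ≠ (fun i => w * f i) i.succ :=
      fun i e => h i (mul_left_cancel e)
    rw [cbr_pos f h]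
    unfold permAct
    rw [Finsupp.sum_single_index (by rw [zero_smul]), one_smul]
  · have h2 : ¬ ∀ i : Fin d, (fun i => w * f i) i.castSucc ≠ (fun i => w * f i) i.succ := by
      simp only [ne_eq, not_forall, not_not] at h ⊢
      obtain ⟨i, hi⟩ := h
      exact ⟨i, by rw [hi]⟩
    rw [cbr_neg f h, cbr_neg _ h2]
    unfold permAct
    rw [Finsupp.sum_zero_index]

lemma permAct_add (w : Equiv.Perm (Fin r)) (c c' : CMod r d) :
    permAct r d w (c + c') = permAct r d w c + permAct r d w c' := by
  unfold permAct
  exact Finsupp.sum_add_index' (fun v => zero_smul _ _) (fun v a b => add_smul a b _)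

lemma permAct_sum (w : Equiv.Perm (Fin r)) {ι : Type} (s : Finset ι) (F : ι → CMod r d) :
    permAct r d w (∑ x ∈ s, F x) = ∑ x ∈ s, permAct r d w (F x) := by
  classical
  induction s using Finset.induction_on with
  | empty => unfold permAct; simp [Finsupp.sum_zero_index]
  | insert _ _ hx ih =>
    rw [Finset.sum_insert hx, Finset.sum_insert hx, permAct_add, ih]

end AuxPermAct
theorem stmt14 (r d : ℕ) (hr : 1 ≤ r) (w : Equiv.Perm (Fin r))
    (u : Fin (r + d) → Fin r) (hu : Function.Surjective u) (hnd : Nondeg u) :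
    Function.Surjective (fun i : Fin (r + d) => w (u i)) ∧
    Nondeg (fun i : Fin (r + d) => w (u i)) ∧
    TCsum r d (fun i => w (u i)) = permAct r d w (TCsum r d u) := by
  classical
  have hu' : Function.Surjective (fun i : Fin (r + d) => w (u i)) :=
    fun k => (hu (w⁻¹ k)).imp fun i hi => by simp [hi]
  have hnd' : Nondeg (fun i : Fin (r + d) => w (u i)) := fun i h e => hnd i h (w.injective e)
  refine ⟨hu', hnd', ?_⟩
  unfold TCsum
  rw [permAct_sum]
  have hmem' : ∀ x ∈ maxChains (fun i => w (u i)), (fun i k => x i (w k)) ∈ maxChains u := by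
    intro x hx
    have h1 := maxChains_map w⁻¹ (fun i => w (u i)) hx
    have e1 : (fun i => w⁻¹ ((fun i => w (u i)) i)) = u := by funext i; simp
    have e2 : (fun i k => x i ((w⁻¹)⁻¹ k)) = fun i k => x i (w k) := by simp
    rw [e1, e2] at h1
    exact h1
  refine Finset.sum_nbij' (fun x => fun i k => x i (w k)) (fun x => fun i k => x i (w⁻¹ k))
    hmem' (fun x hx => maxChains_map w u hx) ?_ ?_ ?_
  · intro x hx
    funext i k
    simp
  · intro x hx
    funext i k
    simp
  · intro x hx
    rw [permAct_cbr]
    congr 1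
    funext i
    have hch : PrismMaxChain (fun i => w (u i)) x := (Finset.mem_filter.mp hx).2
    have hv : IsVertex (fun i => w (u i)) (x i) := chain_isVertex hu' hch i
    have hv' : IsVertex u (fun k => x i (w k)) := (isVertex_comp w).mp hv
    exact tauPerm_comp w hv'
end
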